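/- arXiv:1202.6019 — 12 statements merged into one kernel-verified Lean document; each statement's English description precedes it below -/
import Mathlib

section
/- Let K be a number field with ring of integers O_K, ε ∈ O_K^× a unit of infinite order, k > 0, and T a bounded subset of the mixed space E. Suppose there is a β ∈ O_K such that for every ξ ∈ T, either there exists γ ∈ O_K with N(ι(ε)·ξ − ι(β) − ι(γ)) < k, or ι(ε)·ξ − ι(β) ∈ T. Then every k-exceptional point ξ₀ ∈ T satisfies: for every index j with |ι(ε)|_j > 1, the j-th component of ξ₀ equals the j-th component of ι(β) divided by the j-th component of ι(ε) − 1 (equivalently, |ξ₀ − ι(β)/(ι(ε)−1)|_j = 0 at those components). -/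
/-!
Multiplying by the unit `ε` preserves `N`, so `ξ ↦ ι ε * ξ - ι β` maps `k`-exceptional points to
`k`-exceptional points; for those the first alternative of the hypothesis is excluded, so the
whole orbit of `ξ₀` stays in the bounded set `T`. At a component where `|ι ε| > 1` the map is an
expanding affine map of `ℝ` or `ℂ`, whose only bounded orbit is its fixed point `ι β / (ι ε - 1)`.
-/

open NumberField NumberField.InfinitePlace

theorem eq_div_sub_one_of_norm_iterate_le {𝕜 : Type*} [NormedField 𝕜] {e b x : 𝕜}
    (he : 1 < ‖e‖) {R : ℝ} (hR : ∀ n, ‖(fun y ↦ e * y - b)^[n] x‖ ≤ R) :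
    x = b / (e - 1) := by
  have he1 : e - 1 ≠ 0 := sub_ne_zero.mpr fun h ↦ by simp [h] at he
  set c := b / (e - 1)
  have hfix : e * c - b = c := by simp only [c]; field_simp; ring
  -- `c` is the fixed point of `y ↦ e * y - b`, and the orbit moves away from it geometrically.
  have hiter : ∀ n, (fun y ↦ e * y - b)^[n] x - c = e ^ n * (x - c) := by
    intro n
    induction n with
    | zero => simp
    | succ n ih =>
      rw [Function.iterate_succ_apply', pow_succ, mul_right_comm, ← ih]
      linear_combination hfix
  by_contra hne
  have hxc : 0 < ‖x - c‖ := norm_pos_iff.mpr (sub_ne_zero.mpr hne)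
  obtain ⟨n, hn⟩ := pow_unbounded_of_one_lt ((R + ‖c‖) / ‖x - c‖) he
  rw [div_lt_iff₀ hxc] at hn
  have : ‖e‖ ^ n * ‖x - c‖ ≤ R + ‖c‖ := by
    rw [← norm_pow, ← norm_mul, ← hiter n]
    exact (norm_sub_le _ _).trans (by linarith [hR n])
  linarith

theorem RingHom.eq_div_sub_one_of_norm_iterate_le {A 𝕜 : Type*} [Ring A] [NormedField 𝕜]
    (π : A →+* 𝕜) {a b x : A} (ha : 1 < ‖π a‖) {R : ℝ}
    (hR : ∀ n, ‖π ((fun y ↦ a * y - b)^[n] x)‖ ≤ R) :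
    π x = π b / (π a - 1) := by
  have hπ : Function.Semiconj π (fun y ↦ a * y - b) (fun z ↦ π a * z - π b) :=
    fun y ↦ by simp
  exact _root_.eq_div_sub_one_of_norm_iterate_le ha fun n ↦ hπ.iterate_right n x ▸ hR n

namespace NumberField.mixedEmbedding

variable {K : Type*} [Field K] [NumberField K]

variable (K) in
def IsExceptional (k : ℝ) (ξ : mixedSpace K) : Prop :=
  ∀ γ : 𝓞 K, k ≤ mixedEmbedding.norm (ξ - mixedEmbedding K (γ : K))

theorem IsExceptional.unit_mul_sub {k : ℝ} {ξ : mixedSpace K} (hξ : IsExceptional K k ξ)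
    (u : (𝓞 K)ˣ) (β : 𝓞 K) :
    IsExceptional K k (mixedEmbedding K (u : K) * ξ - mixedEmbedding K (β : K)) := by
  intro γ
  have hδ : mixedEmbedding K (u : K) * mixedEmbedding K ((u⁻¹ * (β + γ) : 𝓞 K) : K) =
      mixedEmbedding K (β : K) + mixedEmbedding K (γ : K) := by
    rw [← map_mul, ← map_add]
    simp
  rw [sub_sub, ← hδ, ← mul_sub, map_mul, norm_unit, one_mul]
  exact hξ _

theorem iterate_unit_mul_sub_mem_of_isExceptional {k : ℝ} {T : Set (mixedSpace K)} (u : (𝓞 K)ˣ) (β : 𝓞 K)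
    (hstep : ∀ ξ ∈ T,
      (∃ γ : 𝓞 K, mixedEmbedding.norm
          (mixedEmbedding K (u : K) * ξ - mixedEmbedding K (β : K)
            - mixedEmbedding K (γ : K)) < k) ∨
      mixedEmbedding K (u : K) * ξ - mixedEmbedding K (β : K) ∈ T)
    {ξ : mixedSpace K} (hξT : ξ ∈ T) (hξ : IsExceptional K k ξ) (n : ℕ) :
    (fun ξ ↦ mixedEmbedding K (u : K) * ξ - mixedEmbedding K (β : K))^[n] ξ ∈ T := by
  induction n generalizing ξ with
  | zero => exact hξT
  | succ n ih =>
    have hξ' := hξ.unit_mul_sub u β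
    exact ih ((hstep ξ hξT).resolve_left fun ⟨γ, hγ⟩ ↦ (hξ' γ).not_gt hγ) hξ'

end NumberField.mixedEmbedding

theorem stmt_1_general (K : Type*) [Field K] [NumberField K]
    (ε : (𝓞 K)ˣ)
    (k : ℝ)
    (T : Set (mixedEmbedding.mixedSpace K)) (hT : Bornology.IsBounded T)
    (β : 𝓞 K)
    (hstep : ∀ ξ ∈ T,
      (∃ γ : 𝓞 K, mixedEmbedding.norm
          (mixedEmbedding K (ε : K) * ξ - mixedEmbedding K (β : K)
            - mixedEmbedding K (γ : K)) < k) ∨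
      mixedEmbedding K (ε : K) * ξ - mixedEmbedding K (β : K) ∈ T)
    (ξ₀ : mixedEmbedding.mixedSpace K) (hξ₀ : ξ₀ ∈ T)
    (hexc : ∀ γ : 𝓞 K, k ≤ mixedEmbedding.norm (ξ₀ - mixedEmbedding K (γ : K))) :
    (∀ w : {w : InfinitePlace K // IsReal w},
      1 < |(mixedEmbedding K (ε : K)).1 w| →
        ξ₀.1 w = (mixedEmbedding K (β : K)).1 w / ((mixedEmbedding K (ε : K)).1 w - 1)) ∧
    (∀ w : {w : InfinitePlace K // IsComplex w},
      1 < ‖(mixedEmbedding K (ε : K)).2 w‖ →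
        ξ₀.2 w = (mixedEmbedding K (β : K)).2 w / ((mixedEmbedding K (ε : K)).2 w - 1)) := by
  classical -- the sup norm of `mixedSpace K` needs `Fintype` instances on the places
  obtain ⟨R, hR⟩ := hT.exists_norm_le
  have hbound (n : ℕ) :
      ‖(fun ξ ↦ mixedEmbedding K (ε : K) * ξ - mixedEmbedding K (β : K))^[n] ξ₀‖ ≤ R :=
    hR _ (mixedEmbedding.iterate_unit_mul_sub_mem_of_isExceptional ε β hstep hξ₀ hexc n)
  refine ⟨fun w hw ↦ ?_, fun w hw ↦ ?_⟩
  · exact RingHom.eq_div_sub_one_of_norm_iterate_le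
      ((Pi.evalRingHom _ w).comp (RingHom.fst _ _) : mixedEmbedding.mixedSpace K →+* ℝ)
      (by rwa [Real.norm_eq_abs]) fun n ↦
        (norm_le_pi_norm _ w).trans ((norm_fst_le _).trans (hbound n))
  · exact RingHom.eq_div_sub_one_of_norm_iterate_le
      ((Pi.evalRingHom _ w).comp (RingHom.snd _ _) : mixedEmbedding.mixedSpace K →+* ℂ)
      hw fun n ↦ (norm_le_pi_norm _ w).trans ((norm_snd_le _).trans (hbound n))

/-- If `T` is a bounded subset of the mixed space, `ε` a unit of infinite order and
`β ∈ O_K` is such that multiplication by `ι ε` followed by translation by `-ι β`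
maps every point of `T` either into a `k`-covered region or back into `T`, then
every `k`-exceptional point `ξ₀ ∈ T` agrees with `ι β / (ι ε - 1)` at every
component at which `|ι ε| > 1`. -/
theorem stmt_1 (K : Type*) [Field K] [NumberField K]
    (ε : (𝓞 K)ˣ) (hε : ¬ IsOfFinOrder ε)
    (k : ℝ) (hk : 0 < k)
    (T : Set (mixedEmbedding.mixedSpace K)) (hT : Bornology.IsBounded T)
    (β : 𝓞 K)
    (hstep : ∀ ξ ∈ T,
      (∃ γ : 𝓞 K, mixedEmbedding.norm
          (mixedEmbedding K (ε : K) * ξ - mixedEmbedding K (β : K)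
            - mixedEmbedding K (γ : K)) < k) ∨
      mixedEmbedding K (ε : K) * ξ - mixedEmbedding K (β : K) ∈ T)
    (ξ₀ : mixedEmbedding.mixedSpace K) (hξ₀ : ξ₀ ∈ T)
    (hexc : ∀ γ : 𝓞 K, k ≤ mixedEmbedding.norm (ξ₀ - mixedEmbedding K (γ : K))) :
    (∀ w : {w : InfinitePlace K // IsReal w},
      1 < |(mixedEmbedding K (ε : K)).1 w| →
        ξ₀.1 w = (mixedEmbedding K (β : K)).1 w / ((mixedEmbedding K (ε : K)).1 w - 1)) ∧
    (∀ w : {w : InfinitePlace K // IsComplex w},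
      1 < ‖(mixedEmbedding K (ε : K)).2 w‖ →
        ξ₀.2 w = (mixedEmbedding K (β : K)).2 w / ((mixedEmbedding K (ε : K)).2 w - 1)) :=
  stmt_1_general K ε k T hT β hstep ξ₀ hξ₀ hexc
end

section
/- Let K be a number field with ring of integers O_K, ε ∈ O_K^× a unit of infinite order with |ι(ε)|_j ≠ 1 for every index 1 ≤ j ≤ r₁+r₂, k > 0, and T a bounded subset of the mixed space E. Suppose there is a β ∈ O_K such that for every ξ ∈ T, either there exists γ ∈ O_K with N(ι(ε)·ξ − ι(β) − ι(γ)) < k, or ι(ε)·ξ − ι(β) ∈ T. If ξ₀ ∈ T is k-exceptional, then the sequence defined by ξ_{i+1} = ι(ε)·ξ_i − ι(β) consists of k-exceptional points of T and converges in E to ι(β)/(ι(ε)−1) (the componentwise quotient, which is defined since no component of ι(ε) − 1 vanishes). -/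
open NumberField NumberField.InfinitePlace

theorem aux_geom_stmt2 {F : Type*} [NormedField F] (a c : F) (ha : ‖a‖ ≠ 1)
    (M : ℝ) (hM : ∀ i : ℕ, ‖a ^ i * c‖ ≤ M) :
    Filter.Tendsto (fun i : ℕ => a ^ i * c) Filter.atTop (nhds 0) := by
  rcases lt_or_gt_of_ne ha with h | h
  · simpa using (tendsto_pow_atTop_nhds_zero_of_norm_lt_one h).mul_const c
  · have hc : c = 0 := by
      by_contra hc
      have hc' : 0 < ‖c‖ := norm_pos_iff.mpr hc
      obtain ⟨i, hi⟩ := ((tendsto_pow_atTop_atTop_of_one_lt h).eventually_gt_atTop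
        (M / ‖c‖)).exists
      have h2 := hM i
      rw [norm_mul, norm_pow] at h2
      have := (div_lt_iff₀ hc').mp hi
      linarith
    simp [hc]

/-- Under the hypotheses of the previous proposition, if moreover no archimedean
absolute value of `ε` equals `1`, then the orbit `ξ_{i+1} = ι ε · ξ_i - ι β` of a
`k`-exceptional point `ξ₀ ∈ T` consists of `k`-exceptional points of `T` and
converges to `ι β / (ι ε - 1)` (componentwise quotient). -/
theorem stmt_2 (K : Type*) [Field K] [NumberField K]
    (ε : (𝓞 K)ˣ) (hε : ¬ IsOfFinOrder ε)
    (hεabs : (∀ w : {w : InfinitePlace K // IsReal w},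
        |(mixedEmbedding K (ε : K)).1 w| ≠ 1) ∧
      (∀ w : {w : InfinitePlace K // IsComplex w},
        ‖(mixedEmbedding K (ε : K)).2 w‖ ≠ 1))
    (k : ℝ) (hk : 0 < k)
    (T : Set (mixedEmbedding.mixedSpace K)) (hT : Bornology.IsBounded T)
    (β : 𝓞 K)
    (hstep : ∀ ξ ∈ T,
      (∃ γ : 𝓞 K, mixedEmbedding.norm
          (mixedEmbedding K (ε : K) * ξ - mixedEmbedding K (β : K)
            - mixedEmbedding K (γ : K)) < k) ∨
      mixedEmbedding K (ε : K) * ξ - mixedEmbedding K (β : K) ∈ T)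
    (ξ₀ : mixedEmbedding.mixedSpace K) (hξ₀ : ξ₀ ∈ T)
    (hexc : ∀ γ : 𝓞 K, k ≤ mixedEmbedding.norm (ξ₀ - mixedEmbedding K (γ : K)))
    (ξ : ℕ → mixedEmbedding.mixedSpace K) (hξzero : ξ 0 = ξ₀)
    (hξsucc : ∀ i, ξ (i + 1) = mixedEmbedding K (ε : K) * ξ i - mixedEmbedding K (β : K)) :
    (∀ i, ξ i ∈ T ∧ ∀ γ : 𝓞 K, k ≤ mixedEmbedding.norm (ξ i - mixedEmbedding K (γ : K))) ∧
    Filter.Tendsto ξ Filter.atTop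
      (nhds (mixedEmbedding K (β : K) / (mixedEmbedding K (ε : K) - 1))) := by
  classical
  set f : 𝓞 K →+* mixedEmbedding.mixedSpace K :=
    (mixedEmbedding K).comp (algebraMap (𝓞 K) K) with hf
  have hfx : ∀ x : 𝓞 K, mixedEmbedding K (x : K) = f x := fun x => rfl
  set e : mixedEmbedding.mixedSpace K := mixedEmbedding K (ε : K) with he
  set b : mixedEmbedding.mixedSpace K := mixedEmbedding K (β : K) with hb
  have hnorm_e : mixedEmbedding.norm e = 1 := mixedEmbedding.norm_unit ε
  -- Part A: each ξ i is in T and k-exceptional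
  have main : ∀ i, ξ i ∈ T ∧
      ∀ γ : 𝓞 K, k ≤ mixedEmbedding.norm (ξ i - mixedEmbedding K (γ : K)) := by
    intro i
    induction i with
    | zero => exact ⟨hξzero ▸ hξ₀, hξzero ▸ hexc⟩
    | succ i ih =>
      have hexc' : ∀ γ : 𝓞 K,
          k ≤ mixedEmbedding.norm (ξ (i + 1) - mixedEmbedding K (γ : K)) := by
        intro γ
        set δ : 𝓞 K := ((ε⁻¹ : (𝓞 K)ˣ) : 𝓞 K) * (β + γ) with hδ
        have h0 : (ε : 𝓞 K) * δ = β + γ := by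
          rw [hδ, ← mul_assoc, Units.mul_inv, one_mul]
        have hfδ : e * f δ = b + f γ := by
          have h1 : f ((ε : 𝓞 K) * δ) = f (β + γ) := by rw [h0]
          rw [map_mul, map_add] at h1
          exact h1
        have key : ξ (i + 1) - mixedEmbedding K (γ : K) =
            e * (ξ i - mixedEmbedding K (δ : K)) := by
          rw [hξsucc i, hfx γ, hfx δ, mul_sub, hfδ]
          ring
        rw [key, map_mul, hnorm_e, one_mul]
        exact ih.2 δ
      refine ⟨?_, hexc'⟩
      rcases hstep (ξ i) ih.1 with ⟨γ, hγ⟩ | hmem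
      · rw [show e * ξ i - b - mixedEmbedding K (γ : K)
            = ξ (i + 1) - mixedEmbedding K (γ : K) by rw [hξsucc i]] at hγ
        exact absurd hγ (not_lt.mpr (hexc' γ))
      · rw [hξsucc i]; exact hmem
  refine ⟨main, ?_⟩
  -- Part B: convergence
  set L : mixedEmbedding.mixedSpace K := b / (e - 1) with hL
  have he1 : ∀ w, (e - 1).1 w ≠ 0 := by
    intro w h
    apply hεabs.1 w
    have h1 : e.1 w = 1 := by simpa [sub_eq_zero] using h
    rw [h1, abs_one]
  have he2 : ∀ w, (e - 1).2 w ≠ 0 := by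
    intro w h
    apply hεabs.2 w
    have h1 : e.2 w = 1 := by simpa [sub_eq_zero] using h
    rw [h1, norm_one]
  have heL : (e - 1) * L = b := by
    have h1 : ((e - 1) * L).1 = b.1 := by
      funext w
      have hw : L.1 w = b.1 w / (e - 1).1 w := rfl
      rw [Prod.fst_mul, Pi.mul_apply, hw, mul_div_cancel₀ _ (he1 w)]
    have h2 : ((e - 1) * L).2 = b.2 := by
      funext w
      have hw : L.2 w = b.2 w / (e - 1).2 w := rfl
      rw [Prod.snd_mul, Pi.mul_apply, hw, mul_div_cancel₀ _ (he2 w)]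
    exact Prod.ext h1 h2
  have hb' : b = e * L - L := by rw [← heL]; ring
  have horbit : ∀ i, ξ i - L = e ^ i * (ξ 0 - L) := by
    intro i
    induction i with
    | zero => rw [pow_zero, one_mul]
    | succ i ih =>
      have hr : e * ξ i - (e * L - L) - L = e * (ξ i - L) := by ring
      rw [hξsucc i, hb', hr, ih, pow_succ]
      ring
  obtain ⟨C, hC⟩ := hT.exists_norm_le
  have hbound : ∀ i, ‖ξ i - L‖ ≤ C + ‖L‖ := by
    intro i
    calc ‖ξ i - L‖ ≤ ‖ξ i‖ + ‖L‖ := norm_sub_le _ _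
    _ ≤ C + ‖L‖ := by have := hC _ (main i).1; linarith
  -- componentwise convergence
  have hfst : ∀ w, Filter.Tendsto (fun i => (ξ i).1 w) Filter.atTop (nhds (L.1 w)) := by
    intro w
    have hcomp : ∀ i, (ξ i).1 w - L.1 w = (e.1 w) ^ i * ((ξ 0 - L).1 w) := by
      intro i
      have h1 := congrFun (congrArg Prod.fst (horbit i)) w
      simpa [Prod.fst_mul, Prod.pow_fst, Pi.mul_apply, Pi.pow_apply] using h1
    have hM : ∀ i : ℕ, ‖(e.1 w) ^ i * ((ξ 0 - L).1 w)‖ ≤ C + ‖L‖ := by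
      intro i
      rw [← hcomp i]
      calc ‖(ξ i).1 w - L.1 w‖ = ‖((ξ i - L).1) w‖ := rfl
      _ ≤ ‖(ξ i - L).1‖ := norm_le_pi_norm _ w
      _ ≤ ‖ξ i - L‖ := norm_fst_le _
      _ ≤ C + ‖L‖ := hbound i
    have hane : ‖e.1 w‖ ≠ 1 := by rw [Real.norm_eq_abs]; exact hεabs.1 w
    have ht := aux_geom_stmt2 (e.1 w) ((ξ 0 - L).1 w) hane (C + ‖L‖) hM
    have hfun : (fun i => (ξ i).1 w - L.1 w) = fun i => (e.1 w) ^ i * ((ξ 0 - L).1 w) :=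
      funext hcomp
    have h2 : Filter.Tendsto (fun i => (ξ i).1 w - L.1 w) Filter.atTop (nhds 0) := by
      rw [hfun]; exact ht
    simpa using h2.add_const (L.1 w)
  have hsnd : ∀ w, Filter.Tendsto (fun i => (ξ i).2 w) Filter.atTop (nhds (L.2 w)) := by
    intro w
    have hcomp : ∀ i, (ξ i).2 w - L.2 w = (e.2 w) ^ i * ((ξ 0 - L).2 w) := by
      intro i
      have h1 := congrFun (congrArg Prod.snd (horbit i)) w
      simpa [Prod.snd_mul, Prod.pow_snd, Pi.mul_apply, Pi.pow_apply] using h1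
    have hM : ∀ i : ℕ, ‖(e.2 w) ^ i * ((ξ 0 - L).2 w)‖ ≤ C + ‖L‖ := by
      intro i
      rw [← hcomp i]
      calc ‖(ξ i).2 w - L.2 w‖ = ‖((ξ i - L).2) w‖ := rfl
      _ ≤ ‖(ξ i - L).2‖ := norm_le_pi_norm _ w
      _ ≤ ‖ξ i - L‖ := norm_snd_le _
      _ ≤ C + ‖L‖ := hbound i
    have ht := aux_geom_stmt2 (e.2 w) ((ξ 0 - L).2 w) (hεabs.2 w) (C + ‖L‖) hM
    have hfun : (fun i => (ξ i).2 w - L.2 w) = fun i => (e.2 w) ^ i * ((ξ 0 - L).2 w) :=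
      funext hcomp
    have h2 : Filter.Tendsto (fun i => (ξ i).2 w - L.2 w) Filter.atTop (nhds 0) := by
      rw [hfun]; exact ht
    simpa using h2.add_const (L.2 w)
  have h1 : Filter.Tendsto (fun i => (ξ i).1) Filter.atTop (nhds L.1) :=
    tendsto_pi_nhds.2 hfst
  have h2 : Filter.Tendsto (fun i => (ξ i).2) Filter.atTop (nhds L.2) :=
    tendsto_pi_nhds.2 hsnd
  have h3 : Filter.Tendsto (fun i => ((ξ i).1, (ξ i).2)) Filter.atTop (nhds (L.1, L.2)) :=
    h1.prodMk_nhds h2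
  show Filter.Tendsto ξ Filter.atTop (nhds L)
  simpa using h3
end

section
/- Let K be a number field whose unit group O_K^× has rank at least 1. For ξ in the mixed space E, the following are equivalent: (i) the orbit Orb(ξ) = {ι(ε)·ξ + ι(O_K) : ε ∈ O_K^×} is a finite subset of the quotient group E/ι(O_K); (ii) there exists a unit ε ∈ O_K^× of infinite order such that Orb_ε(ξ) = {ι(ε)ⁿ·ξ + ι(O_K) : n ∈ ℤ} is finite; (iii) ξ ∈ ι(K), i.e. ξ is the image of an element of K under the mixed embedding. -/
open NumberField

/-!
If `ξ = ι x` with `x = a / b`, then `ι(c) ξ` modulo `ι(O_K)` only depends on `c` modulo `b`, and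
`O_K / b O_K` is finite; this bounds the whole unit orbit. Conversely, if the powers of a unit `ε`
of infinite order give finitely many classes, two of them agree, `ε ^ m ξ ≡ ε ^ n ξ`, so
`ι(ε ^ n - ε ^ m) ξ = ι t` for some `t ∈ O_K`, and `ξ = ι (t / (ε ^ n - ε ^ m))`.
A unit of infinite order exists as soon as the unit rank is positive.
-/

namespace NumberField

variable {K : Type*} [Field K]

namespace mixedEmbedding

theorem mem_integerLattice_iff {v : mixedSpace K} :
    v ∈ mixedEmbedding.integerLattice K ↔ ∃ t : 𝓞 K, mixedEmbedding K t = v := by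
  simp [mixedEmbedding.integerLattice, LinearMap.mem_range]

theorem mk_mixedEmbedding_eq_of_sub_eq {x y : K} {t : 𝓞 K} (h : x - y = t) :
    (QuotientAddGroup.mk (mixedEmbedding K x) :
        mixedSpace K ⧸ (mixedEmbedding.integerLattice K).toAddSubgroup) =
      QuotientAddGroup.mk (mixedEmbedding K y) := by
  refine QuotientAddGroup.eq.mpr (mem_integerLattice_iff.mpr ⟨-t, ?_⟩)
  rw [neg_add_eq_sub, ← map_sub, ← neg_sub, h, ← map_neg]

theorem finite_range_mk_mixedEmbedding_mul [NumberField K] (x : K) :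
    (Set.range fun c : 𝓞 K => (QuotientAddGroup.mk (mixedEmbedding K (c * x)) :
      mixedSpace K ⧸ (mixedEmbedding.integerLattice K).toAddSubgroup)).Finite := by
  obtain ⟨⟨a, b⟩, hab⟩ := IsLocalization.surj (nonZeroDivisors (𝓞 K)) x
  set I := Ideal.span {(b : 𝓞 K)}
  have : Finite (𝓞 K ⧸ I) := Ideal.finiteQuotientOfFreeOfNeBot I
    (by simp [I, nonZeroDivisors.ne_zero b.2])
  refine (Set.finite_range fun q : 𝓞 K ⧸ I => QuotientAddGroup.mk
    (mixedEmbedding K (q.out * x))).subset ?_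
  rintro _ ⟨c, rfl⟩
  obtain ⟨t, ht⟩ := Ideal.mem_span_singleton'.mp
    (Ideal.Quotient.eq.mp (Ideal.Quotient.mk_out (Ideal.Quotient.mk I c)))
  refine ⟨Ideal.Quotient.mk I c, mk_mixedEmbedding_eq_of_sub_eq (t := t * a) ?_⟩
  calc _ = ((t * b : 𝓞 K) : K) * x := by rw [ht]; push_cast; ring
    _ = ((t * a : 𝓞 K) : K) := by
      push_cast; rw [mul_assoc, mul_comm _ x]; exact congrArg (_ * ·) hab

theorem mem_range_of_mul_mem_range {u : K} (hu : u ≠ 0) {ξ : mixedSpace K}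
    (h : mixedEmbedding K u * ξ ∈ Set.range (mixedEmbedding K)) :
    ξ ∈ Set.range (mixedEmbedding K) := by
  obtain ⟨y, hy⟩ := h
  refine ⟨u⁻¹ * y, ?_⟩
  rw [map_mul, hy, ← mul_assoc, ← map_mul, inv_mul_cancel₀ hu, map_one, one_mul]

theorem mem_range_of_mk_mul_eq_mk_mul {u v : K} (huv : u ≠ v) {ξ : mixedSpace K}
    (h : (QuotientAddGroup.mk (mixedEmbedding K u * ξ) :
        mixedSpace K ⧸ (mixedEmbedding.integerLattice K).toAddSubgroup) =
      QuotientAddGroup.mk (mixedEmbedding K v * ξ)) :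
    ξ ∈ Set.range (mixedEmbedding K) := by
  obtain ⟨t, ht⟩ := mem_integerLattice_iff.mp (QuotientAddGroup.eq.mp h)
  refine mem_range_of_mul_mem_range (sub_ne_zero.mpr huv.symm) ⟨t, ?_⟩
  rw [ht, map_sub, sub_mul, neg_add_eq_sub]

theorem mem_range_of_finite_zpow_orbit {u : K} (hu : Function.Injective fun n : ℤ ↦ u ^ n)
    {ξ : mixedSpace K}
    (h : {c : mixedSpace K ⧸ (mixedEmbedding.integerLattice K).toAddSubgroup |
      ∃ n : ℤ, c = QuotientAddGroup.mk (mixedEmbedding K (u ^ n) * ξ)}.Finite) :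
    ξ ∈ Set.range (mixedEmbedding K) := by
  obtain ⟨m, n, hmn, hmk⟩ := h.exists_lt_map_eq_of_forall_mem
    (f := fun n : ℤ ↦ QuotientAddGroup.mk (mixedEmbedding K (u ^ n) * ξ))
    (fun n ↦ by exact ⟨n, rfl⟩)
  exact mem_range_of_mk_mul_eq_mk_mul (hu.ne hmn.ne) hmk

end mixedEmbedding

theorem Units.not_isOfFinOrder_fundSystem [NumberField K] (i : Fin (Units.rank K)) :
    ¬ IsOfFinOrder (Units.fundSystem K i) := fun hfin ↦ by
  have h := Units.logEmbedding_fundSystem K i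
  rw [Units.dirichletUnitTheorem.logEmbedding_eq_zero_iff.mpr
    ((CommGroup.mem_torsion _).mpr hfin)] at h
  exact (Units.basisUnitLattice K).ne_zero i (ZeroMemClass.coe_eq_zero.mp h.symm)

end NumberField

open NumberField.mixedEmbedding in
/-- For a number field `K` of unit rank at least `1` and a point `ξ` of the mixed
space, the following are equivalent: (i) the orbit of `ξ + ι(O_K)` under the unit
group is finite, (ii) the orbit of `ξ + ι(O_K)` under the powers of some unit of
infinite order is finite, (iii) `ξ` lies in the image of `K` under the mixed
embedding. -/
theorem stmt_5 (K : Type*) [Field K] [NumberField K]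
    (hrank : 1 ≤ NumberField.Units.rank K)
    (ξ : mixedEmbedding.mixedSpace K) :
    List.TFAE
      [ Set.Finite {c : mixedEmbedding.mixedSpace K ⧸
            (mixedEmbedding.integerLattice K).toAddSubgroup |
          ∃ ε : (𝓞 K)ˣ, c = QuotientAddGroup.mk (mixedEmbedding K (ε : K) * ξ)},
        ∃ ε : (𝓞 K)ˣ, ¬ IsOfFinOrder ε ∧
          Set.Finite {c : mixedEmbedding.mixedSpace K ⧸
              (mixedEmbedding.integerLattice K).toAddSubgroup |
            ∃ n : ℤ, c = QuotientAddGroup.mk (mixedEmbedding K ((ε : K) ^ n) * ξ)},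
        ξ ∈ Set.range (mixedEmbedding K) ] := by
  tfae_have 3 → 1
  | ⟨x, hx⟩ => (finite_range_mk_mixedEmbedding_mul x).subset <| by
    rintro _ ⟨ε, rfl⟩
    exact ⟨ε, by rw [← hx, ← map_mul]⟩
  tfae_have 1 → 2
  | hfin => ⟨_, Units.not_isOfFinOrder_fundSystem ⟨0, hrank⟩, hfin.subset <| by
    rintro _ ⟨n, rfl⟩
    exact ⟨_ ^ n, by rw [NumberField.Units.coe_zpow]⟩⟩
  tfae_have 2 → 3
  | ⟨ε, hε, hfin⟩ => mem_range_of_finite_zpow_orbit (fun m n hmn ↦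
    injective_zpow_iff_not_isOfFinOrder.mpr hε <| NumberField.Units.coe_injective K <| by
      simpa only [NumberField.Units.coe_zpow] using hmn) hfin
  tfae_finish
end

section
/- Let c₁, c₂, c₃, k be positive real numbers, and let x, y, z be real numbers with 0 < x ≤ c₁, 0 < y ≤ c₂, 0 < z ≤ c₃, and xyz = k. Then x + y + z ≤ max{ c_i + c_j + k/(c_i·c_j) : 1 ≤ i < j ≤ 3 }, i.e. x + y + z ≤ max( c₁ + c₂ + k/(c₁c₂), c₁ + c₃ + k/(c₁c₃), c₂ + c₃ + k/(c₂c₃) ). -/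
/-!
Since `t ↦ t + P / t` is convex on `(0, ∞)`, a sum `x + y` of positive numbers with fixed product
`P` and upper bounds `x ≤ a`, `y ≤ b` is largest when one of them sits at its bound. Applying this
first to `x, y` and then to `z` and the remaining free variable pushes two of the three variables
to their bounds, which leaves the third equal to `k / (cᵢ * cⱼ)`.
-/

open Set

lemma convexOn_add_div {P : ℝ} (hP : 0 ≤ P) : ConvexOn ℝ (Ioi 0) fun t : ℝ ↦ t + P / t := by
  refine ((convexOn_id (convex_Ioi 0)).add ((convexOn_zpow (-1)).smul hP)).congr fun t _ ↦ ?_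
  simp [div_eq_mul_inv]

lemma add_le_max_of_mul_eq {x y a b P : ℝ} (hx : 0 < x) (hy : 0 < y) (hxa : x ≤ a) (hyb : y ≤ b)
    (hxy : x * y = P) : x + y ≤ max (a + P / a) (b + P / b) := by
  have hP : 0 < P := hxy ▸ mul_pos hx hy
  have hb : 0 < b := hy.trans_le hyb
  have hy_eq : y = P / x := by rw [← hxy, mul_div_cancel_left₀ _ hx.ne']
  have hx_mem : x ∈ Icc (P / b) a :=
    ⟨div_le_of_le_mul₀ hb.le hx.le (hxy ▸ mul_le_mul_of_nonneg_left hyb hx.le), hxa⟩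
  have := (convexOn_add_div hP.le).le_max_of_mem_Icc (div_pos hP hb) (hx.trans_le hxa) hx_mem
  rwa [div_div_cancel₀ hP.ne', ← hy_eq, add_comm (P / b), max_comm] at this

theorem stmt_9_general (c₁ c₂ c₃ k x y z : ℝ)
    (hc₁ : 0 < c₁) (hc₂ : 0 < c₂)
    (hx : 0 < x) (hy : 0 < y) (hz : 0 < z)
    (hxc : x ≤ c₁) (hyc : y ≤ c₂) (hzc : z ≤ c₃)
    (hxyz : x * y * z = k) :
    x + y + z ≤
      max (c₁ + c₂ + k / (c₁ * c₂)) (max (c₁ + c₃ + k / (c₁ * c₃)) (c₂ + c₃ + k / (c₂ * c₃))) := by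
  obtain hxy | hxy := le_max_iff.mp (add_le_max_of_mul_eq hx hy hxc hyc rfl)
  · have hy' : x * y / c₁ ≤ c₂ :=
      (div_le_of_le_mul₀ hc₁.le hy.le (by linarith [mul_le_mul_of_nonneg_right hxc hy.le])).trans hyc
    have hyz := add_le_max_of_mul_eq (by positivity) hz hy' hzc
      (show x * y / c₁ * z = k / c₁ by rw [← hxyz]; ring)
    rw [div_div, div_div] at hyz
    rcases le_max_iff.mp hyz with h | h
    · exact le_max_of_le_left (by linarith)
    · exact le_max_of_le_right (le_max_of_le_left (by linarith))
  · have hx' : x * y / c₂ ≤ c₁ :=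
      (div_le_of_le_mul₀ hc₂.le hx.le (mul_le_mul_of_nonneg_left hyc hx.le)).trans hxc
    have hxz := add_le_max_of_mul_eq (by positivity) hz hx' hzc
      (show x * y / c₂ * z = k / c₂ by rw [← hxyz]; ring)
    rw [div_div, div_div, mul_comm c₂ c₁] at hxz
    rcases le_max_iff.mp hxz with h | h
    · exact le_max_of_le_left (by linarith)
    · exact le_max_of_le_right (le_max_of_le_right (by linarith))

theorem stmt_9 (c₁ c₂ c₃ k x y z : ℝ)
    (hc₁ : 0 < c₁) (hc₂ : 0 < c₂) (hc₃ : 0 < c₃) (hk : 0 < k)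
    (hx : 0 < x) (hy : 0 < y) (hz : 0 < z)
    (hxc : x ≤ c₁) (hyc : y ≤ c₂) (hzc : z ≤ c₃)
    (hxyz : x * y * z = k) :
    x + y + z ≤
      max (c₁ + c₂ + k / (c₁ * c₂)) (max (c₁ + c₃ + k / (c₁ * c₃)) (c₂ + c₃ + k / (c₂ * c₃))) :=
  stmt_9_general c₁ c₂ c₃ k x y z hc₁ hc₂ hx hy hz hxc hyc hzc hxyz
end

section
/- Let K be a number field with r₁ real embeddings and r₂ pairs of complex-conjugate embeddings, and let r = r₁ + r₂ − 1 be the rank of its unit group. Then there exist units ε₁,…,ε_r ∈ O_K^× that are multiplicatively independent (they generate a free abelian subgroup of rank r of O_K^×) and satisfy |φ(ε_i)| ≠ 1 for every 1 ≤ i ≤ r and every archimedean embedding φ : K → ℂ. -/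
/-!
By Dirichlet's construction, for each infinite place `w` there is a unit `u_w` with `|u_w|_v < 1`
at every place `v ≠ w`; the product formula `∑ m_v log |u_w|_v = 0` then forces `|u_w|_w > 1`.
For `w` ranging over the places other than a fixed `w₀`, the matrix `(m_v log |u_w|_v)` has
nonpositive off-diagonal entries and positive row sums `-m_{w₀} log |u_w|_{w₀}`, so it is strictly
diagonally dominant, hence nonsingular: the `u_w` are multiplicatively independent.
-/

open NumberField NumberField.InfinitePlace NumberField.Units
  NumberField.Units.dirichletUnitTheorem Finset

theorem Matrix.det_ne_zero_of_nonpos_offDiag_of_sum_row_pos {n : Type*} [Fintype n]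
    [DecidableEq n] {A : Matrix n n ℝ} (hoff : ∀ i j, i ≠ j → A i j ≤ 0)
    (hsum : ∀ i, 0 < ∑ j, A i j) : A.det ≠ 0 := by
  refine det_ne_zero_of_sum_row_lt_diag fun i => ?_
  have hnorm : ∑ j ∈ univ.erase i, ‖A i j‖ = -∑ j ∈ univ.erase i, A i j := by
    rw [← sum_neg_distrib]
    refine sum_congr rfl fun j hj => ?_
    rw [Real.norm_eq_abs, abs_of_nonpos (hoff i j (ne_of_mem_erase hj).symm)]
  have hsplit := add_sum_erase univ (A i) (mem_univ i)
  calc ∑ j ∈ univ.erase i, ‖A i j‖ < A i i := by linarith [hsum i]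
    _ ≤ ‖A i i‖ := le_abs_self _

namespace NumberField.Units

variable {K : Type*} [Field K] [NumberField K]

theorem log_place_pos_of_forall_log_neg {u : (𝓞 K)ˣ} {w w₁ : InfinitePlace K} (h₁ : w₁ ≠ w)
    (hu : ∀ v, v ≠ w → Real.log (v u) < 0) : 0 < Real.log (w u) := by
  by_contra! hw
  have hterm (v : InfinitePlace K) : v.mult * Real.log (v u) ≤ 0 := by
    refine mul_nonpos_of_nonneg_of_nonpos (Nat.cast_nonneg _) ?_
    rcases eq_or_ne v w with rfl | hv
    exacts [hw, (hu v hv).le]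
  have hneg : ∑ v : InfinitePlace K, v.mult * Real.log (v u) < 0 := by
    refine sum_neg_iff_of_nonpos (fun v _ => hterm v) |>.mpr ⟨w₁, mem_univ _, ?_⟩
    exact mul_neg_of_pos_of_neg (Nat.cast_pos.mpr mult_pos) (hu w₁ h₁)
  exact hneg.ne (sum_mult_mul_log u)

theorem log_place_ne_zero_of_forall_log_neg {u : (𝓞 K)ˣ} {w w₁ : InfinitePlace K} (h₁ : w₁ ≠ w)
    (hu : ∀ v, v ≠ w → Real.log (v u) < 0) (v : InfinitePlace K) : Real.log (v u) ≠ 0 := by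
  rcases eq_or_ne v w with rfl | hv
  · exact (log_place_pos_of_forall_log_neg h₁ hu).ne'
  · exact (hu v hv).ne

theorem linearIndependent_logEmbedding_of_forall_log_neg
    {u : {w : InfinitePlace K // w ≠ w₀} → (𝓞 K)ˣ}
    (hu : ∀ w (v : InfinitePlace K), v ≠ w.1 → Real.log (v (u w)) < 0) :
    LinearIndependent ℝ fun w => logEmbedding K (Additive.ofMul (u w)) := by
  classical
  refine Matrix.linearIndependent_rows_of_det_ne_zero
    (A := Matrix.of fun w => logEmbedding K (Additive.ofMul (u w))) ?_
  refine Matrix.det_ne_zero_of_nonpos_offDiag_of_sum_row_pos (fun w v hwv => ?_) (fun w => ?_)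
  · rw [Matrix.of_apply, logEmbedding_component]
    exact mul_nonpos_of_nonneg_of_nonpos (Nat.cast_nonneg _)
      (hu w v (Subtype.coe_ne_coe.mpr hwv.symm)).le
  · simp only [Matrix.of_apply, sum_logEmbedding_component, neg_mul]
    exact neg_pos.mpr <| mul_neg_of_pos_of_neg (Nat.cast_pos.mpr mult_pos) (hu w w₀ w.prop.symm)

theorem eq_zero_of_prod_zpow_eq_one {ι : Type*} [Fintype ι] {ε : ι → (𝓞 K)ˣ}
    (hε : LinearIndependent ℝ fun i => logEmbedding K (Additive.ofMul (ε i)))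
    {n : ι → ℤ} (hn : ∏ i, ε i ^ n i = 1) (i : ι) : n i = 0 := by
  have hZ : LinearIndependent ℤ fun i => Additive.ofMul (ε i) :=
    (hε.restrict_scalars' ℤ).of_comp (logEmbedding K).toIntLinearMap
  refine Fintype.linearIndependent_iff.mp hZ n ?_ i
  simpa [← ofMul_zpow, ← ofMul_prod] using congrArg Additive.ofMul hn

end NumberField.Units

/-- Every number field has a system of `r = r₁ + r₂ - 1` multiplicatively
independent units all of whose archimedean absolute values are `≠ 1`. -/
theorem stmt_10 (K : Type*) [Field K] [NumberField K]
    (r : ℕ)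
    (hr : r + 1 = NumberField.InfinitePlace.nrRealPlaces K
      + NumberField.InfinitePlace.nrComplexPlaces K) :
    ∃ ε : Fin r → (𝓞 K)ˣ,
      (∀ n : Fin r → ℤ, (∏ i, ε i ^ n i) = 1 → ∀ i, n i = 0) ∧
      ∀ (i : Fin r) (φ : K →+* ℂ), ‖φ ((ε i : 𝓞 K) : K)‖ ≠ 1 := by
  classical
  obtain ⟨e⟩ : Nonempty (Fin r ≃ {w : InfinitePlace K // w ≠ w₀}) := by
    refine Fintype.card_eq.mp ?_
    rw [Fintype.card_fin, Fintype.card_subtype_compl, Fintype.card_subtype_eq,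
      card_eq_nrRealPlaces_add_nrComplexPlaces, ← hr]
    omega
  choose u hu using exists_unit K
  have hind := (linearIndependent_logEmbedding_of_forall_log_neg (u := fun w => u w)
    fun w => hu w).comp e e.injective
  refine ⟨fun i => u (e i), fun n hn i => eq_zero_of_prod_zpow_eq_one hind hn i, fun i φ h => ?_⟩
  refine log_place_ne_zero_of_forall_log_neg (e i).prop.symm (hu (e i)) (mk φ) ?_
  rw [apply, h, Real.log_one]
end

section
/- Let K be a number field of degree n over ℚ, let p be a rational prime, and let 𝔭 be a prime ideal of O_K lying above p with ramification index e(𝔭|p) = n (so p is totally ramified in K/ℚ and 𝔭 has residue degree 1). Then for every unit ε ∈ O_K^×, one has ε^n ≡ 1 (mod 𝔭) or ε^n ≡ −1 (mod 𝔭). -/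
/-! Comparing absolute norms, `p O_K = 𝔭ⁿ` and `O_K/𝔭 = 𝔽_p`, so `ε ≡ a (mod 𝔭)` for some `a ∈ ℤ`
and `(ε - a)ⁿ ∈ p O_K`. Multiplication by `ε` on `O_K/p O_K` is thus `a` plus a nilpotent
endomorphism, whose determinant is `aⁿ`; hence `±1 = N(ε) ≡ aⁿ ≡ εⁿ (mod 𝔭)`. -/

open NumberField

theorem Matrix.isNilpotent_det_scalar_add_sub_pow {n R : Type*} [Fintype n] [DecidableEq n]
    [CommRing R] {M : Matrix n n R} (hM : IsNilpotent M) (r : R) :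
    IsNilpotent ((scalar n r + M).det - r ^ Fintype.card n) := by
  simpa [eval_charpoly] using
    (isNilpotent_charpoly_sub_pow_of_isNilpotent hM.neg).map (Polynomial.evalRingHom r)

namespace Algebra

variable {R S : Type*} [CommRing R] [CommRing S] [Algebra R S] [Module.Free R S]
  [Module.Finite R S]

theorem norm_sub_pow_mem_radical {r a : R} {x : S} {k : ℕ}
    (hx : algebraMap R S r ∣ (x - algebraMap R S a) ^ k) :
    Algebra.norm R x - a ^ Module.finrank R S ∈ (Ideal.span {r}).radical := by
  nontriviality R
  obtain ⟨z, hz⟩ := hx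
  let b := Module.Free.chooseBasis R S
  let f := Ideal.Quotient.mk (Ideal.span {r})
  have map_scalar (c : R) : f.mapMatrix (algebraMap R (Matrix _ _ R) c) =
      Matrix.scalar (Module.Free.ChooseBasisIndex R S) (f c) := by
    simp [Matrix.algebraMap_eq_diagonal]
  have hnil : IsNilpotent (f.mapMatrix (leftMulMatrix b (x - algebraMap R S a))) := by
    refine ⟨k, ?_⟩
    rw [← map_pow, ← map_pow, hz, map_mul, map_mul, AlgHom.commutes, map_scalar,
      Ideal.Quotient.eq_zero_iff_mem.mpr (Ideal.mem_span_singleton_self r)]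
    simp
  have hdet : f (Algebra.norm R x) = (Matrix.scalar _ (f a) +
      f.mapMatrix (leftMulMatrix b (x - algebraMap R S a))).det := by
    rw [Algebra.norm_eq_matrix_det b, RingHom.map_det, map_sub, map_sub, AlgHom.commutes,
      map_scalar, add_sub_cancel]
  obtain ⟨m, hm⟩ := Matrix.isNilpotent_det_scalar_add_sub_pow hnil (f a)
  refine ⟨m, Ideal.Quotient.eq_zero_iff_mem.mp ?_⟩
  rwa [map_pow, map_sub, hdet, map_pow, Module.finrank_eq_card_chooseBasisIndex]

theorem algebraMap_norm_sub_pow_mem {P : Ideal S} [P.IsPrime] {r a : R} {x : S} {k : ℕ}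
    (hr : algebraMap R S r ∈ P) (hx : algebraMap R S r ∣ (x - algebraMap R S a) ^ k) :
    algebraMap R S (Algebra.norm R x) - x ^ Module.finrank R S ∈ P := by
  have hxa : x - algebraMap R S a ∈ P :=
    ‹P.IsPrime›.mem_of_pow_mem k (P.mem_of_dvd hx hr)
  have hnorm : algebraMap R S (Algebra.norm R x - a ^ Module.finrank R S) ∈ P := by
    refine ((Ideal.IsPrime.comap _).radical_le_iff.mpr ?_) (norm_sub_pow_mem_radical hx)
    rwa [Ideal.span_singleton_le_iff_mem]
  have hpow : x ^ Module.finrank R S - algebraMap R S a ^ Module.finrank R S ∈ P :=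
    P.mem_of_dvd (sub_dvd_pow_sub_pow _ _ _) hxa
  simpa using P.sub_mem hnorm hpow

end Algebra

theorem Nat.eq_and_eq_one_of_prime_pow_eq_pow_mul {p n A t : ℕ} (hp : p.Prime) (hn : n ≠ 0)
    (hA : A ≠ 1) (h : p ^ n = A ^ n * t) : A = p ∧ t = 1 := by
  have hAp : A = p :=
    (hp.eq_one_or_self_of_dvd A ((Nat.pow_dvd_pow_iff hn).mp (Dvd.intro t h.symm))).resolve_left hA
  subst hAp
  exact ⟨rfl, (Nat.mul_eq_left (pow_ne_zero n hp.ne_zero)).mp h.symm⟩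

namespace Ideal

variable {S : Type*} [CommRing S] [IsDedekindDomain S] [Module.Free ℤ S]

theorem span_natCast_eq_pow_and_absNorm_eq_of_ramificationIdx'_eq_finrank [Module.Finite ℤ S]
    {p : ℕ} (hp : p.Prime) {P : Ideal S} [P.IsPrime]
    (he : ramificationIdx' (span {(p : ℤ)}) P = Module.finrank ℤ S) :
    span {(p : S)} = P ^ Module.finrank ℤ S ∧ absNorm P = p := by
  have : Nontrivial S := (Ideal.Quotient.mk P).domain_nontrivial
  have hle : span {(p : S)} ≤ P ^ Module.finrank ℤ S := by
    simpa [map_span, he] using le_pow_ramificationIdx' (p := span {(p : ℤ)}) (P := P)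
  obtain ⟨J, hPJ⟩ := dvd_iff_le.mpr hle
  have hnorm : p ^ Module.finrank ℤ S = absNorm P ^ Module.finrank ℤ S * absNorm J := by
    rw [← absNorm_span_natCast, hPJ, map_mul, map_pow]
  obtain ⟨hP, hJ⟩ := Nat.eq_and_eq_one_of_prime_pow_eq_pow_mul hp Module.finrank_pos.ne'
    (absNorm_eq_one_iff.not.mpr IsPrime.ne_top') hnorm
  rw [hPJ, absNorm_eq_one_iff.mp hJ, mul_top]
  exact ⟨rfl, hP⟩

theorem exists_intCast_sub_mem_of_absNorm_eq_prime {p : ℕ} (hp : p.Prime) {P : Ideal S}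
    (hP : absNorm P = p) (x : S) : ∃ a : ℤ, x - a ∈ P := by
  have hcard : Nat.card (S ⧸ P) = p := by rw [← hP, absNorm_apply, Submodule.cardQuot_apply]
  have : Finite (S ⧸ P) := Nat.finite_of_card_ne_zero (hcard ▸ hp.ne_zero)
  let := Fintype.ofFinite (S ⧸ P)
  let e := ZMod.ringEquivOfPrime (S ⧸ P) hp (Fintype.card_eq_nat_card.trans hcard)
  obtain ⟨a, ha⟩ := ZMod.intCast_surjective (e.symm (Quotient.mk P x))
  refine ⟨a, Quotient.eq.mp ?_⟩
  rw [map_intCast, ← map_intCast e, ha, RingEquiv.apply_symm_apply]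

end Ideal

/-- If the rational prime `p` is totally ramified in the number field `K` of
degree `n`, say `p O_K = 𝔭ⁿ`, then every unit `ε ∈ O_K^×` satisfies
`εⁿ ≡ ±1 (mod 𝔭)`. -/
theorem stmt_11 (K : Type*) [Field K] [NumberField K]
    (n : ℕ) (hn : n = Module.finrank ℚ K)
    (p : ℕ) (hp : p.Prime)
    (P : Ideal (𝓞 K)) (hP : P.IsPrime) (hPp : (p : 𝓞 K) ∈ P)
    (he : Ideal.ramificationIdx' (Ideal.span {(p : ℤ)}) P = n) :
    ∀ ε : (𝓞 K)ˣ, (ε : 𝓞 K) ^ n - 1 ∈ P ∨ (ε : 𝓞 K) ^ n + 1 ∈ P := by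
  intro ε
  have hrank : Module.finrank ℤ (𝓞 K) = n := (RingOfIntegers.rank K).trans hn.symm
  obtain ⟨hspan, hnorm⟩ :=
    Ideal.span_natCast_eq_pow_and_absNorm_eq_of_ramificationIdx'_eq_finrank hp (he.trans hrank.symm)
  obtain ⟨a, ha⟩ := Ideal.exists_intCast_sub_mem_of_absNorm_eq_prime hp hnorm ε
  have hdvd : algebraMap ℤ (𝓞 K) p ∣ ((ε : 𝓞 K) - algebraMap ℤ (𝓞 K) a) ^ n := by
    rw [← Ideal.mem_span_singleton, map_natCast, hspan, hrank, eq_intCast]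
    exact Ideal.pow_mem_pow ha n
  have key := Algebra.algebraMap_norm_sub_pow_mem (by rwa [map_natCast]) hdvd
  rw [hrank] at key
  rcases Int.isUnit_iff.mp (ε.isUnit.map (Algebra.norm ℤ)) with h | h <;>
    rw [h, ← P.neg_mem_iff] at key
  · left; simpa using key
  · right; simpa [add_comm] using key
end

section
/- Let K be a number field of degree n over ℚ, let p be a rational prime, and let 𝔭 be a prime ideal of O_K lying above p with ramification index e(𝔭|p) = n (totally ramified, residue degree 1). Then the image of the unit group O_K^× under the reduction map O_K → O_K/𝔭 has cardinality at most 2n. Consequently, for any α ∈ O_K and any generator π of 𝔭 (if 𝔭 = (π) is principal), the orbit {ε·(α/π) + O_K : ε ∈ O_K^×} ⊆ K/O_K has at most 2n elements. -/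
/-!
The inclusion `p O_K ≤ 𝔭ⁿ` together with `N(p O_K) = pⁿ` forces `N𝔭 = p`, hence
`p O_K = 𝔭ⁿ` and `O_K/𝔭 = 𝔽_p`. If a unit `ε` is congruent to an integer `c` modulo `𝔭`,
then `(ε - c)ⁿ ∈ p O_K`, so multiplication by `ε` on `O_K/p O_K ≅ 𝔽_pⁿ` is `c` plus a
nilpotent and `N(ε) ≡ cⁿ mod p`. Since `N(ε) = ±1`, the residue of `ε` is a `2n`-th root of
unity, and the field `𝔽_p` has at most `2n` of those. The orbit of `α/π + O_K` is the image of
these residues under `x mod 𝔭 ↦ xα/π mod O_K`, which is well defined because `𝔭 = (π)`.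
-/

open NumberField Module

theorem Matrix.det_eq_pow_of_isNilpotent_sub_scalar {R : Type*} [CommRing R] [IsReduced R]
    {ι : Type*} [Fintype ι] [DecidableEq ι] {M : Matrix ι ι R} {c : R}
    (h : IsNilpotent (M - scalar ι c)) : M.det = c ^ Fintype.card ι := by
  have h' : IsNilpotent (scalar ι c - M) := by
    rw [← neg_sub]
    exact h.neg
  have := (isNilpotent_charpoly_sub_pow_of_isNilpotent h').map (Polynomial.evalRingHom c)
  simpa [eval_charpoly, sub_eq_zero] using this.eq_zero

theorem Algebra.norm_sub_pow_finrank_mem {R S : Type*} [CommRing R] [CommRing S] [Algebra R S]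
    [Module.Free R S] [Module.Finite R S] {I : Ideal R} [I.IsPrime] {x : S} {c : R} {k : ℕ}
    (h : (x - algebraMap R S c) ^ k ∈ I.map (algebraMap R S)) :
    Algebra.norm R x - c ^ finrank R S ∈ I := by
  classical
  nontriviality R
  let b := Free.chooseBasis R S
  let g : S →+* Matrix _ _ (R ⧸ I) :=
    (Ideal.Quotient.mk I).mapMatrix.comp (Algebra.leftMulMatrix b).toRingHom
  have hg (a : R) : g (algebraMap R S a) = Matrix.scalar _ (Ideal.Quotient.mk I a) := by
    simp [g, AlgHom.commutes, Matrix.algebraMap_eq_diagonal, Matrix.diagonal_map]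
  have hker : I.map (algebraMap R S) ≤ RingHom.ker g := by
    rw [Ideal.map_le_iff_le_comap]
    intro a ha
    simp [hg, Ideal.Quotient.eq_zero_iff_mem.mpr ha]
  have hnil : IsNilpotent (g x - Matrix.scalar _ (Ideal.Quotient.mk I c)) :=
    ⟨k, by simpa [hg] using hker h⟩
  rw [← Ideal.Quotient.eq, Algebra.norm_eq_matrix_det b, RingHom.map_det, map_pow,
    finrank_eq_card_chooseBasisIndex]
  exact Matrix.det_eq_pow_of_isNilpotent_sub_scalar hnil

theorem Ideal.Quotient.mk_unit_pow_two_mul_finrank_eq_one {S : Type*} [CommRing S]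
    [Module.Free ℤ S] [Module.Finite ℤ S] {p : ℕ} (hp : p.Prime) {P : Ideal S}
    (hpP : (p : S) ∈ P) {k : ℕ} (hPk : P ^ k ≤ Ideal.span {(p : S)}) (ε : Sˣ) {c : ℤ}
    (hc : Ideal.Quotient.mk P (c : S) = Ideal.Quotient.mk P (ε : S)) :
    Ideal.Quotient.mk P (ε : S) ^ (2 * finrank ℤ S) = 1 := by
  set d := finrank ℤ S
  set N := Algebra.norm ℤ (ε : S)
  let I := Ideal.span {(p : ℤ)}
  have : I.IsPrime := (Ideal.span_singleton_prime (by exact_mod_cast hp.ne_zero)).mpr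
    (Nat.prime_iff_prime_int.mp hp)
  have hIS : I.map (algebraMap ℤ S) = Ideal.span {(p : S)} := by
    simp [I, Ideal.map_span]
  have hnorm : N - c ^ d ∈ I := by
    refine Algebra.norm_sub_pow_finrank_mem (k := k) ?_
    rw [hIS, algebraMap_int_eq, eq_intCast]
    exact hPk (Ideal.pow_mem_pow (Ideal.Quotient.eq.mp hc.symm) k)
  have hN : N ^ 2 = 1 := Int.isUnit_sq (ε.isUnit.map (Algebra.norm ℤ))
  have hI : c ^ (2 * d) - 1 ∈ I := by
    rw [show c ^ (2 * d) - 1 = -(N - c ^ d) * (N + c ^ d) by linear_combination hN]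
    exact I.mul_mem_right _ (I.neg_mem hnorm)
  have hIP : I.map (algebraMap ℤ S) ≤ P :=
    hIS ▸ Ideal.span_le.mpr (Set.singleton_subset_iff.mpr hpP)
  have hP : (c : S) ^ (2 * d) - 1 ∈ P := by
    simpa using hIP (Ideal.mem_map_of_mem _ hI)
  rw [← hc, ← map_pow, ← map_one (Ideal.Quotient.mk P)]
  exact Ideal.Quotient.eq.mpr hP

namespace Ideal

variable {S : Type*} [CommRing S] [IsDedekindDomain S] [Module.Free ℤ S]

theorem eq_of_le_of_absNorm_eq {I J : Ideal S} (hIJ : I ≤ J) (h : absNorm I = absNorm J)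
    (hI : absNorm I ≠ 0) : I = J := by
  obtain ⟨L, rfl⟩ := dvd_iff_le.mpr hIJ
  rw [map_mul] at h hI
  have hL : absNorm L = 1 := (Nat.mul_eq_left (left_ne_zero_of_mul hI)).mp h
  rw [absNorm_eq_one_iff.mp hL, mul_top]

variable [Module.Finite ℤ S] {p : ℕ} {P : Ideal S}

theorem absNorm_eq_of_span_natCast_le_pow_finrank (hp : p.Prime) (hP : P ≠ ⊤)
    (hle : span {(p : S)} ≤ P ^ finrank ℤ S) : absNorm P = p := by
  have hdvd := absNorm_dvd_absNorm_of_le hle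
  rw [absNorm_span_natCast, map_pow, Nat.pow_dvd_pow_iff finrank_pos.ne'] at hdvd
  exact ((Nat.dvd_prime hp).mp hdvd).resolve_left (mt absNorm_eq_one_iff.mp hP)

theorem span_natCast_eq_pow_finrank_of_le (hp : p.Prime) (hP : P ≠ ⊤)
    (hle : span {(p : S)} ≤ P ^ finrank ℤ S) : span {(p : S)} = P ^ finrank ℤ S := by
  refine eq_of_le_of_absNorm_eq hle ?_ ?_
  · rw [absNorm_span_natCast, map_pow, absNorm_eq_of_span_natCast_le_pow_finrank hp hP hle]
  · rw [absNorm_span_natCast]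
    exact pow_ne_zero _ hp.ne_zero

theorem natCard_quotient_eq_of_span_natCast_le_pow_finrank (hp : p.Prime) (hP : P ≠ ⊤)
    (hle : span {(p : S)} ≤ P ^ finrank ℤ S) : Nat.card (S ⧸ P) = p := by
  rw [← absNorm_eq_of_span_natCast_le_pow_finrank hp hP hle, absNorm_apply,
    Submodule.cardQuot_apply]

end Ideal

theorem Int.cast_surjective_of_natCard_eq_prime {R : Type*} [Ring R] {p : ℕ} (hp : p.Prime)
    (hR : Nat.card R = p) : Function.Surjective (Int.cast : ℤ → R) := by
  have : Fintype R :=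
    have := Nat.finite_of_card_ne_zero (hR ▸ hp.ne_zero)
    Fintype.ofFinite R
  let e := ZMod.ringEquivOfPrime R hp (by rw [Fintype.card_eq_nat_card, hR])
  intro y
  obtain ⟨m, hm⟩ := ZMod.intCast_surjective (e.symm y)
  exact ⟨m, by rw [← map_intCast e, hm, e.apply_symm_apply]⟩

theorem Nat.card_le_of_forall_pow_eq_one {R : Type*} [CommRing R] [IsDomain R] {k : ℕ}
    (hk : 0 < k) {s : Set R} (hs : ∀ x ∈ s, x ^ k = 1) : Nat.card s ≤ k := by
  classical
  have hsub : s ⊆ Polynomial.nthRootsFinset k (1 : R) := fun x hx =>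
    (Polynomial.mem_nthRootsFinset hk 1).mpr (hs x hx)
  calc Nat.card s ≤ Nat.card (Polynomial.nthRootsFinset k (1 : R) : Set R) :=
        Nat.card_mono (Finset.finite_toSet _) hsub
    _ = (Polynomial.nthRootsFinset k (1 : R)).card :=
        Nat.card_coe_set_eq _ ▸ Set.ncard_coe_finset _
    _ ≤ k := (Multiset.toFinset_card_le _).trans (Polynomial.card_nthRoots k 1)

theorem Nat.card_range_le_of_factorsThrough {α β γ : Type*} {f : α → β} {g : α → γ}
    (h : f.FactorsThrough g) [Finite (Set.range g)] :
    Nat.card (Set.range f) ≤ Nat.card (Set.range g) := by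
  refine Nat.card_le_card_of_surjective (fun y => ⟨f y.2.choose, y.2.choose, rfl⟩) ?_
  rintro ⟨_, a, rfl⟩
  have ha : ∃ b, g b = g a := ⟨a, rfl⟩
  exact ⟨⟨g a, ha⟩, Subtype.ext (h ha.choose_spec)⟩

theorem factorsThrough_mk_mul_div_mk_span_singleton {R K : Type*} [CommRing R] [Field K]
    [Algebra R K] {π : R} (hπ : algebraMap R K π ≠ 0) (α : R) :
    (fun x : R => (QuotientAddGroup.mk
      (algebraMap R K x * (algebraMap R K α / algebraMap R K π)) :
        K ⧸ (algebraMap R K).toAddMonoidHom.range)).FactorsThrough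
      (Ideal.Quotient.mk (Ideal.span {π})) := by
  intro x y h
  obtain ⟨w, hw⟩ := Ideal.mem_span_singleton'.mp (Ideal.Quotient.eq.mp h)
  rw [QuotientAddGroup.eq]
  refine ⟨-(w * α), ?_⟩
  have hwK := congrArg (algebraMap R K) hw
  simp only [RingHom.toAddMonoidHom_eq_coe, AddMonoidHom.coe_coe, map_neg, map_mul, map_sub]
    at hwK ⊢
  field_simp
  linear_combination (-algebraMap R K α) * hwK

/-- If the rational prime `p` is totally ramified in the number field `K` of
degree `n`, say with `𝔭` the prime above `p` (of residue degree one), then the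
image of the unit group in `O_K/𝔭` has at most `2n` elements; consequently, if
`𝔭 = (π)` is principal, the orbit of `α/π + O_K ∈ K/O_K` under multiplication
by units has at most `2n` elements. -/
theorem stmt_12 (K : Type*) [Field K] [NumberField K]
    (n : ℕ) (hn : n = Module.finrank ℚ K)
    (p : ℕ) (hp : p.Prime)
    (P : Ideal (𝓞 K)) (hP : P.IsPrime) (hPp : (p : 𝓞 K) ∈ P)
    (he : Ideal.ramificationIdx' (Ideal.span {(p : ℤ)}) P = n) :
    Nat.card (Set.range (fun ε : (𝓞 K)ˣ => Ideal.Quotient.mk P (ε : 𝓞 K))) ≤ 2 * n ∧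
    ∀ (α π : 𝓞 K), Ideal.span {π} = P →
      Nat.card {c : K ⧸ ((algebraMap (𝓞 K) K).toAddMonoidHom.range) |
        ∃ ε : (𝓞 K)ˣ, c = QuotientAddGroup.mk ((ε : K) * ((α : K) / (π : K)))}
        ≤ 2 * n := by
  obtain rfl : n = finrank ℤ (𝓞 K) := by rw [RingOfIntegers.rank, hn]
  have hle : Ideal.span {(p : 𝓞 K)} ≤ P ^ finrank ℤ (𝓞 K) := by
    simpa [Ideal.map_span, he] using
      Ideal.le_pow_ramificationIdx' (p := Ideal.span {(p : ℤ)}) (P := P)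
  have hcard := Ideal.natCard_quotient_eq_of_span_natCast_le_pow_finrank hp hP.ne_top hle
  have : Finite (𝓞 K ⧸ P) := Nat.finite_of_card_ne_zero (hcard ▸ hp.ne_zero)
  have hunits : Nat.card (Set.range fun ε : (𝓞 K)ˣ => Ideal.Quotient.mk P (ε : 𝓞 K)) ≤
      2 * finrank ℤ (𝓞 K) := by
    refine Nat.card_le_of_forall_pow_eq_one (Nat.mul_pos two_pos finrank_pos) ?_
    rintro _ ⟨ε, rfl⟩
    obtain ⟨c, hc⟩ := Int.cast_surjective_of_natCard_eq_prime hp hcard (Ideal.Quotient.mk P ε)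
    exact Ideal.Quotient.mk_unit_pow_two_mul_finrank_eq_one hp hPp
      (Ideal.span_natCast_eq_pow_finrank_of_le hp hP.ne_top hle).ge ε (by simpa using hc)
  refine ⟨hunits, fun α π hπP => ?_⟩
  have hπ : (π : K) ≠ 0 := RingOfIntegers.coe_ne_zero_iff.mpr <|
    ne_zero_of_dvd_ne_zero (Nat.cast_ne_zero.mpr hp.ne_zero)
      (Ideal.mem_span_singleton.mp (hπP ▸ hPp))
  simp only [Set.ofPred_exists, Set.ofPred_eq_eq_singleton, Set.iUnion_singleton_eq_range]
  refine (Nat.card_range_le_of_factorsThrough fun ε ε' h => ?_).trans hunits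
  exact factorsThrough_mk_mul_div_mk_span_singleton hπ α (hπP ▸ h)
end

section
/- Let K = ℚ(α) be a complex cubic number field, where α is an algebraic integer with real conjugate α and complex conjugates α', α'' = conj(α'), and let φ denote the real embedding of K. Let Δ = disc(1, α, α²) ≠ 0, and let η ∈ O_K^× be a fundamental unit with |φ(η)| > 1. Then for every ξ ∈ K with |N_{K/ℚ}(ξ)| = k > 0 there exists a unit ε ∈ O_K^× such that β = ξ·ε satisfies |β·(α'' − α')| ≤ (k·|φ(η)|)^{1/3}·|Δ|^{1/6}, |β'·(α − α'')| ≤ (k·|φ(η)|)^{1/3}·|Δ|^{1/6}, and |β''·(α' − α)| ≤ (k·|φ(η)|)^{1/3}·|Δ|^{1/6}, where β, β', β'' denote the conjugates of β corresponding to α, α', α''. -/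
/-!
Write `t = |φ(η)|`. Since `|N(η)| = t |ψ(η)|² = 1`, replacing `ξ` by `ξ η^m` multiplies
`X = |β (α'' - α')|` by `t^m`, and multiplies `Y = |β'| |α' - α|`, which equals both
`|β' (α - α'')|` and `|β'' (α' - α)|`, by `t^(-m/2)`. The product
`X Y² = k |α'' - α'| |α' - α|² = k |Δ|^(1/2)` does not depend on `m` and equals `B³ / t`
for the bound `B = (k t)^(1/3) |Δ|^(1/6)`. Choosing `m` with `B / t < X ≤ B` then forces
`Y² = B³ / (t X) < B²`.
-/

open NumberField ComplexEmbedding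

noncomputable def Fintype.finThreeEquivOfCardEq {α : Type*} [Fintype α]
    (hcard : Fintype.card α = 3) {a b c : α} (hab : a ≠ b) (hac : a ≠ c) (hbc : b ≠ c) :
    Fin 3 ≃ α :=
  Equiv.ofBijective ![a, b, c] <| (Fintype.bijective_iff_injective_and_card _).2
    ⟨fun i j h => by fin_cases i <;> fin_cases j <;> simp_all [eq_comm], by simp [hcard]⟩

section FinThree

variable {F L E : Type*} [Field F] [Field L] [Field E] [Algebra F L] [Algebra F E]
  [FiniteDimensional F L] [Algebra.IsSeparable F L] [IsAlgClosed E] (e : Fin 3 ≃ (L →ₐ[F] E))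

theorem Algebra.norm_eq_prod_fin_three (x : L) :
    algebraMap F E (Algebra.norm F x) = e 0 x * e 1 x * e 2 x := by
  rw [Algebra.norm_eq_prod_embeddings, ← e.prod_comp, Fin.prod_univ_three]

theorem Algebra.discr_eq_sq_fin_three (α : L) :
    algebraMap F E (Algebra.discr F ![1, α, α ^ 2]) =
      ((e 1 α - e 0 α) * (e 2 α - e 0 α) * (e 2 α - e 1 α)) ^ 2 := by
  rw [Algebra.discr_eq_det_embeddingsMatrixReindex_pow_two F E _ e, Matrix.det_fin_three]
  simp only [Algebra.embeddingsMatrixReindex, Algebra.embeddingsMatrix, Matrix.reindex_apply,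
    Equiv.refl_symm, Equiv.coe_refl, Equiv.symm_symm, Matrix.submatrix_apply, id_eq,
    Matrix.of_apply, Matrix.cons_val_zero, Matrix.cons_val_one, Matrix.cons_val, map_one, map_pow]
  ring

end FinThree

theorem Complex.norm_conj_sub_of_conj_eq {z : ℂ} (hz : starRingEnd ℂ z = z) (w : ℂ) :
    ‖starRingEnd ℂ w - z‖ = ‖w - z‖ := by
  rw [← Complex.norm_conj, map_sub, Complex.conj_conj, hz]

section ComplexCubic

variable {K : Type*} [Field K] [NumberField K] {φ ψ : K →+* ℂ}

noncomputable def complexCubicEmbeddings (hdeg : Module.finrank ℚ K = 3) (hφ : IsReal φ)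
    (hψ : ¬IsReal ψ) : Fin 3 ≃ (K →ₐ[ℚ] ℂ) :=
  Fintype.finThreeEquivOfCardEq (by rw [AlgHom.card, hdeg])
    ((RingHom.equivRatAlgHom K ℂ).injective.ne (show φ ≠ ψ from fun h => hψ (h ▸ hφ)))
    ((RingHom.equivRatAlgHom K ℂ).injective.ne
      (show φ ≠ conjugate ψ from fun h => hψ (isReal_conjugate_iff.mp (h ▸ hφ))))
    ((RingHom.equivRatAlgHom K ℂ).injective.ne
      (show ψ ≠ conjugate ψ from fun h => hψ (isReal_iff.mpr h.symm)))

theorem abs_norm_eq_norm_mul_norm_sq (hdeg : Module.finrank ℚ K = 3) (hφ : IsReal φ)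
    (hψ : ¬IsReal ψ) (x : K) :
    |(Algebra.norm ℚ x : ℝ)| = ‖φ x‖ * ‖ψ x‖ ^ 2 := by
  have h := Algebra.norm_eq_prod_fin_three (complexCubicEmbeddings hdeg hφ hψ) x
  simp only [eq_ratCast, complexCubicEmbeddings, Fintype.finThreeEquivOfCardEq,
    Equiv.ofBijective_apply, Matrix.cons_val_zero, Matrix.cons_val_one, Matrix.cons_val,
    RingHom.equivRatAlgHom_apply, RingHom.toRatAlgHom_apply, conjugate_coe_eq] at h
  rw [← Complex.norm_ratCast, h, norm_mul, norm_mul, Complex.norm_conj]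
  ring

theorem abs_discr_eq_norm_mul_norm_sq_sq (hdeg : Module.finrank ℚ K = 3) (hφ : IsReal φ)
    (hψ : ¬IsReal ψ) (α : K) :
    |(Algebra.discr ℚ ![1, α, α ^ 2] : ℝ)| =
      (‖starRingEnd ℂ (ψ α) - ψ α‖ * ‖ψ α - φ α‖ ^ 2) ^ 2 := by
  have h := Algebra.discr_eq_sq_fin_three (complexCubicEmbeddings hdeg hφ hψ) α
  simp only [eq_ratCast, complexCubicEmbeddings, Fintype.finThreeEquivOfCardEq,
    Equiv.ofBijective_apply, Matrix.cons_val_zero, Matrix.cons_val_one, Matrix.cons_val,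
    RingHom.equivRatAlgHom_apply, RingHom.toRatAlgHom_apply, conjugate_coe_eq] at h
  rw [← Complex.norm_ratCast, h, norm_pow, norm_mul, norm_mul,
    Complex.norm_conj_sub_of_conj_eq (RingHom.congr_fun hφ α)]
  ring

end ComplexCubic

theorem exists_zpow_mul_le {X Y B t s : ℝ} (hX : 0 < X) (hB : 0 < B) (ht : 1 < t)
    (hst : t * s ^ 2 = 1) (hXYB : X * Y ^ 2 * t = B ^ 3) :
    ∃ m : ℤ, X * t ^ m ≤ B ∧ Y * s ^ m ≤ B := by
  obtain ⟨m, hlo, hhi⟩ := exists_mem_Ico_zpow (div_pos hB hX) ht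
  have ht0 : 0 < t := one_pos.trans ht
  have hY : Y ^ 2 ≤ B ^ 2 * t ^ m := by
    have h : Y ^ 2 * (X * t) ≤ B ^ 2 * t ^ m * (X * t) :=
      calc Y ^ 2 * (X * t) = B ^ 2 * B := by rw [← pow_succ, ← hXYB]; ring
        _ ≤ B ^ 2 * (X * t ^ (m + 1)) := by gcongr; exact (div_le_iff₀' hX).mp hhi.le
        _ = B ^ 2 * t ^ m * (X * t) := by rw [zpow_add_one₀ ht0.ne']; ring
    exact le_of_mul_le_mul_right h (by positivity)
  refine ⟨m, (le_div_iff₀' hX).mp hlo, le_of_abs_le (abs_le_of_sq_le_sq ?_ hB.le)⟩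
  calc (Y * s ^ m) ^ 2
      = Y ^ 2 * (s ^ 2) ^ m := by
        rw [mul_pow, ← zpow_natCast (s ^ m), ← zpow_natCast s, ← zpow_mul, ← zpow_mul,
          mul_comm m]
    _ ≤ B ^ 2 * t ^ m * (s ^ 2) ^ m := by gcongr
    _ = B ^ 2 := by rw [mul_assoc, ← mul_zpow, hst, one_zpow, mul_one]

theorem rpow_third_mul_sq_rpow_sixth_pow_three {a b : ℝ} (ha : 0 ≤ a) (hb : 0 ≤ b) :
    (a ^ (1 / 3 : ℝ) * (b ^ 2) ^ (1 / 6 : ℝ)) ^ 3 = a * b := by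
  have hb' : (b ^ 2) ^ (1 / 6 : ℝ) = b ^ (1 / 3 : ℝ) := by
    rw [← Real.rpow_natCast, ← Real.rpow_mul hb]; norm_num
  rw [hb', ← Real.mul_rpow ha hb, ← Real.rpow_natCast, ← Real.rpow_mul (mul_nonneg ha hb)]
  norm_num

theorem stmt_14_general (K : Type*) [Field K] [NumberField K]
    (α : K) (hdeg : Module.finrank ℚ K = 3)
    (φ ψ : K →+* ℂ) (hφ : ∀ x, (φ x).im = 0) (hψ : (ψ α).im ≠ 0)
    (hΔ : Algebra.discr ℚ ![1, α, α ^ 2] ≠ 0)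
    (η : (𝓞 K)ˣ) (hη : 1 < ‖φ ((η : 𝓞 K) : K)‖)
    (ξ : K) (k : ℝ) (hk : 0 < k) (hkξ : k = |(Algebra.norm ℚ ξ : ℝ)|) :
    ∃ ε : (𝓞 K)ˣ,
      ‖φ (ξ * ((ε : 𝓞 K) : K)) * ((starRingEnd ℂ) (ψ α) - ψ α)‖ ≤
          (k * ‖φ ((η : 𝓞 K) : K)‖) ^ ((1 : ℝ) / 3) *
            |((Algebra.discr ℚ ![1, α, α ^ 2] : ℚ) : ℝ)| ^ ((1 : ℝ) / 6) ∧
      ‖ψ (ξ * ((ε : 𝓞 K) : K)) * (φ α - (starRingEnd ℂ) (ψ α))‖ ≤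
          (k * ‖φ ((η : 𝓞 K) : K)‖) ^ ((1 : ℝ) / 3) *
            |((Algebra.discr ℚ ![1, α, α ^ 2] : ℚ) : ℝ)| ^ ((1 : ℝ) / 6) ∧
      ‖(starRingEnd ℂ) (ψ (ξ * ((ε : 𝓞 K) : K))) * (ψ α - φ α)‖ ≤
          (k * ‖φ ((η : 𝓞 K) : K)‖) ^ ((1 : ℝ) / 3) *
            |((Algebra.discr ℚ ![1, α, α ^ 2] : ℚ) : ℝ)| ^ ((1 : ℝ) / 6) := by
  have hφR : IsReal φ := isReal_iff.mpr (RingHom.ext fun x => Complex.conj_eq_iff_im.mpr (hφ x))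
  have hψR : ¬IsReal ψ := fun h => hψ (Complex.conj_eq_iff_im.mp (RingHom.congr_fun h α))
  have hnorm := abs_norm_eq_norm_mul_norm_sq hdeg hφR hψR
  set A := ‖starRingEnd ℂ (ψ α) - ψ α‖
  set C := ‖ψ α - φ α‖
  have hC : ‖φ α - starRingEnd ℂ (ψ α)‖ = C := by
    rw [norm_sub_rev, Complex.norm_conj_sub_of_conj_eq (RingHom.congr_fun hφR α)]
  set B := (k * ‖φ ((η : 𝓞 K) : K)‖) ^ ((1 : ℝ) / 3) *
    |((Algebra.discr ℚ ![1, α, α ^ 2] : ℚ) : ℝ)| ^ ((1 : ℝ) / 6) with hBdef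
  have hξ : ξ ≠ 0 := by
    rintro rfl
    simp only [Algebra.norm_zero, Rat.cast_zero, abs_zero] at hkξ
    linarith
  have hX : 0 < ‖φ ξ‖ * A := mul_pos (norm_pos_iff.mpr ((map_ne_zero φ).mpr hξ))
    (norm_pos_iff.mpr (sub_ne_zero.mpr (mt Complex.conj_eq_iff_im.mp hψ)))
  have hB : 0 < B := by
    have : 0 < |((Algebra.discr ℚ ![1, α, α ^ 2] : ℚ) : ℝ)| :=
      abs_pos.mpr (by exact_mod_cast hΔ)
    positivity
  have hunit : ‖φ ((η : 𝓞 K) : K)‖ * ‖ψ ((η : 𝓞 K) : K)‖ ^ 2 = 1 := by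
    rw [← hnorm, ← Rat.cast_abs, NumberField.Units.norm, Rat.cast_one]
  have hXYB : ‖φ ξ‖ * A * (‖ψ ξ‖ * C) ^ 2 * ‖φ ((η : 𝓞 K) : K)‖ = B ^ 3 := by
    rw [hBdef, abs_discr_eq_norm_mul_norm_sq_sq hdeg hφR hψR,
      rpow_third_mul_sq_rpow_sixth_pow_three (by positivity) (by positivity), hkξ, hnorm]
    ring
  obtain ⟨m, h1, h2⟩ := exists_zpow_mul_le hX hB hη hunit hXYB
  refine ⟨η ^ m, ?_, ?_, ?_⟩ <;>
    simp only [map_mul, norm_mul, Units.coe_zpow, map_zpow₀, norm_zpow, Complex.norm_conj, hC] <;>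
    linarith

/-- In a complex cubic field `K = ℚ(α)` with real embedding `φ`, complex
embedding `ψ` and fundamental unit `η` with `|φ(η)| > 1`, every `ξ ∈ K` of norm
`±k ≠ 0` can be multiplied by a unit `ε` so that `β = ξ ε` satisfies
`|β(α'' - α')|, |β'(α - α'')|, |β''(α' - α)| ≤ (k |φ(η)|)^{1/3} |Δ|^{1/6}`,
where `Δ = disc(1, α, α²)`. -/
theorem stmt_14 (K : Type*) [Field K] [NumberField K]
    (α : K) (hα : IsIntegral ℤ α) (hgen : Algebra.adjoin ℚ {α} = ⊤)
    (hdeg : Module.finrank ℚ K = 3)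
    (φ ψ : K →+* ℂ) (hφ : ∀ x, (φ x).im = 0) (hψ : (ψ α).im ≠ 0)
    (hΔ : Algebra.discr ℚ ![1, α, α ^ 2] ≠ 0)
    (η : (𝓞 K)ˣ)
    (hfund : ∀ u : (𝓞 K)ˣ, ∃ (ζ : (𝓞 K)ˣ) (m : ℤ), IsOfFinOrder ζ ∧ u = ζ * η ^ m)
    (hη : 1 < ‖φ ((η : 𝓞 K) : K)‖)
    (ξ : K) (k : ℝ) (hk : 0 < k) (hkξ : k = |(Algebra.norm ℚ ξ : ℝ)|) :
    ∃ ε : (𝓞 K)ˣ,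
      ‖φ (ξ * ((ε : 𝓞 K) : K)) * ((starRingEnd ℂ) (ψ α) - ψ α)‖ ≤
          (k * ‖φ ((η : 𝓞 K) : K)‖) ^ ((1 : ℝ) / 3) *
            |((Algebra.discr ℚ ![1, α, α ^ 2] : ℚ) : ℝ)| ^ ((1 : ℝ) / 6) ∧
      ‖ψ (ξ * ((ε : 𝓞 K) : K)) * (φ α - (starRingEnd ℂ) (ψ α))‖ ≤
          (k * ‖φ ((η : 𝓞 K) : K)‖) ^ ((1 : ℝ) / 3) *
            |((Algebra.discr ℚ ![1, α, α ^ 2] : ℚ) : ℝ)| ^ ((1 : ℝ) / 6) ∧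
      ‖(starRingEnd ℂ) (ψ (ξ * ((ε : 𝓞 K) : K))) * (ψ α - φ α)‖ ≤
          (k * ‖φ ((η : 𝓞 K) : K)‖) ^ ((1 : ℝ) / 3) *
            |((Algebra.discr ℚ ![1, α, α ^ 2] : ℚ) : ℝ)| ^ ((1 : ℝ) / 6) :=
  stmt_14_general K α hdeg φ ψ hφ hψ hΔ η hη ξ k hk hkξ
end

section
/- Let K = ℚ(α) be a complex cubic number field, where α is an algebraic integer, let Δ = disc(1, α, α²), let φ denote the real embedding of K, and let η ∈ O_K^× be a fundamental unit with |φ(η)| > 1. Then for every ξ ∈ K with |N_{K/ℚ}(ξ)| = k > 0 there exists a unit ε ∈ O_K^× such that, writing ξ·ε = a + bα + cα² with a, b, c ∈ ℚ, one has |c| ≤ (k·|φ(η)|/|Δ|)^{1/3} · (2 + 1/|φ(η)|). -/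
/-!
Let `σ` be a non-real embedding and put `A = |σ α - φ α|²`, `B = |σ α - φ α| |σ̄ α - σ α|`, so
that `|Δ| = A B²`. Cramer's rule for the Vandermonde system with nodes `φ α, σ α, σ̄ α` bounds the
`α²`-coordinate of `x` by `s / A + 2 q / B`, where `s = |φ x|` and `q = |σ x|` satisfy
`q² s = |N x| = k`. Multiplying `ξ` by a power of `η` rescales `s` by powers of `u = |φ η|`, so
`s` can be placed in `[A T / u, A T)` with `T = (k u / |Δ|)^{1/3}`. Writing `s = A T v² / u`, the
bound becomes `T (v² / u + 2 / v)` with `1 ≤ v ≤ √u`, a convex function of `v` whose values at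
both ends are at most `T (2 + 1 / u)`.
-/

open NumberField NumberField.ComplexEmbedding

theorem sq_div_add_two_div_le {u v : ℝ} (hv : 1 ≤ v) (hvu : v ^ 2 ≤ u) :
    v ^ 2 / u + 2 / v ≤ 2 + 1 / u := by
  have hu : 0 < u := by nlinarith
  have hv0 : 0 < v := by linarith
  rw [div_add_div _ _ hu.ne' hv0.ne', div_le_iff₀ (by positivity)]
  field_simp
  -- after clearing denominators, the difference of the two sides is `(v - 1) (2 u - v² - v)`
  nlinarith [mul_nonneg (sub_nonneg.2 hv) (by nlinarith : (0:ℝ) ≤ 2 * u - v ^ 2 - v)]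

theorem div_add_two_mul_div_le {u k A B T s q : ℝ} (hu : 0 < u) (hA : 0 < A) (hB : 0 < B)
    (hT : 0 < T) (hT3 : T ^ 3 = k * u / (A * B ^ 2)) (hs₁ : A * T / u ≤ s) (hs₂ : s ≤ A * T)
    (hq : 0 ≤ q) (hqs : q ^ 2 * s = k) :
    s / A + 2 * q / B ≤ T * (2 + 1 / u) := by
  have hq0 : q ≠ 0 := by
    rintro rfl
    simp [← hqs] at hT3
    exact hT.ne' hT3
  have hk : T ^ 3 * (A * B ^ 2) = q ^ 2 * s * u := by
    rw [hT3, hqs]; field_simp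
  set v := T * B / q with hv
  have hs : s = A * T * v ^ 2 / u := by
    rw [hv]; field_simp
    linear_combination -hk
  rw [hs] at hs₁ hs₂ ⊢
  have hv1 : 1 ≤ v := by
    have : 1 ≤ v ^ 2 := by
      rwa [div_le_div_iff_of_pos_right hu, le_mul_iff_one_le_right (by positivity)] at hs₁
    nlinarith [show 0 < v by positivity]
  have hvu : v ^ 2 ≤ u := by
    rwa [div_le_iff₀ hu, mul_le_mul_iff_right₀ (by positivity)] at hs₂
  calc A * T * v ^ 2 / u / A + 2 * q / B = T * (v ^ 2 / u + 2 / v) := by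
        rw [hv]; field_simp
    _ ≤ T * (2 + 1 / u) := mul_le_mul_of_nonneg_left (sq_div_add_two_div_le hv1 hvu) hT.le

theorem exists_mul_zpow_mem_Ico {u r L : ℝ} (hu : 1 < u) (hr : 0 < r) (hL : 0 < L) :
    ∃ n : ℤ, L / u ≤ r * u ^ n ∧ r * u ^ n < L := by
  obtain ⟨n, hn₁, hn₂⟩ := exists_mem_Ioc_zpow (div_pos hL hr) hu
  refine ⟨n, ?_, (lt_div_iff₀' hr).1 hn₁⟩
  rw [zpow_add_one₀ (by positivity), div_le_iff₀' hr] at hn₂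
  rwa [div_le_iff₀ (by positivity), mul_assoc]

theorem quadratic_coeff_mul_vandermonde {R : Type*} [CommRing R] (c₀ c₁ c₂ t₀ t₁ t₂ : R) :
    c₂ * ((t₁ - t₀) * (t₂ - t₀) * (t₂ - t₁)) =
      (t₂ - t₁) * (c₀ + c₁ * t₀ + c₂ * t₀ ^ 2) - (t₂ - t₀) * (c₀ + c₁ * t₁ + c₂ * t₁ ^ 2) +
        (t₁ - t₀) * (c₀ + c₁ * t₂ + c₂ * t₂ ^ 2) := by
  ring

section PowerBasis

variable {K L : Type*} [Field K] [CharZero K] [DivisionRing L] [CharZero L] {n : ℕ} {α : K}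
  {b : Module.Basis (Fin n) ℚ K}

theorem map_eq_sum_repr_mul_pow (hb : ∀ i, b i = α ^ (i : ℕ)) (ψ : K →+* L) (x : K) :
    ψ x = ∑ i, (b.repr x i : L) * ψ α ^ (i : ℕ) := by
  conv_lhs => rw [← b.sum_repr x]
  simp [hb, Rat.smul_def]

theorem RingHom.ext_of_basis_pow (hb : ∀ i, b i = α ^ (i : ℕ)) {ψ₁ ψ₂ : K →+* L}
    (h : ψ₁ α = ψ₂ α) : ψ₁ = ψ₂ :=
  RingHom.ext fun x => by
    rw [map_eq_sum_repr_mul_pow hb ψ₁, map_eq_sum_repr_mul_pow hb ψ₂, h]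

end PowerBasis

section CubicEmbeddings

variable {K : Type*} [Field K] {φ σ : K →+* ℂ}

theorem norm_conjugate_sub_eq (hφ : IsReal φ) (x : K) :
    ‖conjugate σ x - φ x‖ = ‖σ x - φ x‖ := by
  rw [← Complex.norm_conj, map_sub, conjugate_coe_eq, Complex.conj_conj]
  congr 2
  exact RingHom.congr_fun hφ x

theorem injective_embeddings_of_isReal (hφ : IsReal φ) (hσ : ¬ IsReal σ) :
    Function.Injective ![φ, σ, conjugate σ] := by
  have h₁ : φ ≠ σ := by rintro rfl; exact hσ hφ
  have h₂ : φ ≠ conjugate σ := by rintro rfl; exact hσ (isReal_conjugate_iff.1 hφ)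
  have h₃ : σ ≠ conjugate σ := fun h => hσ (isReal_iff.2 h.symm)
  intro i j h
  fin_cases i <;> fin_cases j <;> simp_all [eq_comm]

theorem norm_sub_pos_of_basis_pow [CharZero K] {α : K} {b : Module.Basis (Fin 3) ℚ K}
    (hb : ∀ i, b i = α ^ (i : ℕ)) (hφ : IsReal φ) (hσ : ¬ IsReal σ) :
    0 < ‖σ α - φ α‖ ∧ 0 < ‖conjugate σ α - σ α‖ := by
  simp only [norm_pos_iff, sub_ne_zero]
  exact ⟨fun h => hσ (RingHom.ext_of_basis_pow hb h ▸ hφ),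
    fun h => hσ (isReal_iff.2 (RingHom.ext_of_basis_pow hb h))⟩

theorem abs_repr_two_mul_le [CharZero K] {α : K} {b : Module.Basis (Fin 3) ℚ K}
    (hb : ∀ i, b i = α ^ (i : ℕ)) (hφ : IsReal φ) (x : K) :
    |(b.repr x 2 : ℝ)| * (‖σ α - φ α‖ ^ 2 * ‖conjugate σ α - σ α‖) ≤
      ‖conjugate σ α - σ α‖ * ‖φ x‖ + 2 * ‖σ α - φ α‖ * ‖σ x‖ := by
  have hψ (ψ : K →+* ℂ) : ψ x = b.repr x 0 + b.repr x 1 * ψ α + b.repr x 2 * ψ α ^ 2 := by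
    simp [map_eq_sum_repr_mul_pow hb ψ x, Fin.sum_univ_three]
  have h := quadratic_coeff_mul_vandermonde (b.repr x 0 : ℂ) (b.repr x 1) (b.repr x 2)
    (φ α) (σ α) (conjugate σ α)
  rw [← hψ, ← hψ, ← hψ] at h
  calc |(b.repr x 2 : ℝ)| * (‖σ α - φ α‖ ^ 2 * ‖conjugate σ α - σ α‖)
      = ‖(b.repr x 2 : ℂ) * ((σ α - φ α) * (conjugate σ α - φ α) * (conjugate σ α - σ α))‖ := by
        rw [norm_mul, norm_mul, norm_mul, norm_conjugate_sub_eq hφ, Complex.norm_ratCast]; ring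
    _ = ‖(conjugate σ α - σ α) * φ x - (conjugate σ α - φ α) * σ x +
          (σ α - φ α) * conjugate σ x‖ := by rw [h]
    _ ≤ ‖(conjugate σ α - σ α) * φ x‖ + ‖(conjugate σ α - φ α) * σ x‖ +
          ‖(σ α - φ α) * conjugate σ x‖ :=
        (norm_add_le _ _).trans (add_le_add_left (norm_sub_le _ _) _)
    _ = ‖conjugate σ α - σ α‖ * ‖φ x‖ + 2 * ‖σ α - φ α‖ * ‖σ x‖ := by
        rw [norm_mul, norm_mul, norm_mul, norm_conjugate_sub_eq hφ, conjugate_coe_eq σ x,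
          Complex.norm_conj]
        ring

theorem abs_repr_two_le [CharZero K] {α : K} {b : Module.Basis (Fin 3) ℚ K}
    (hb : ∀ i, b i = α ^ (i : ℕ)) (hφ : IsReal φ) (hσ : ¬ IsReal σ) (x : K) :
    |(b.repr x 2 : ℝ)| ≤
      ‖φ x‖ / ‖σ α - φ α‖ ^ 2 + 2 * ‖σ x‖ / (‖σ α - φ α‖ * ‖conjugate σ α - σ α‖) := by
  obtain ⟨h₁, h₂⟩ := norm_sub_pos_of_basis_pow hb hφ hσ
  calc |(b.repr x 2 : ℝ)|
      ≤ (‖conjugate σ α - σ α‖ * ‖φ x‖ + 2 * ‖σ α - φ α‖ * ‖σ x‖) /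
          (‖σ α - φ α‖ ^ 2 * ‖conjugate σ α - σ α‖) :=
        (le_div_iff₀ (by positivity)).2 (abs_repr_two_mul_le hb hφ x)
    _ = _ := by field_simp

variable [NumberField K]

noncomputable def cubicEmbeddingsEquiv (hdeg : Module.finrank ℚ K = 3) (hφ : IsReal φ)
    (hσ : ¬ IsReal σ) : Fin 3 ≃ (K →+* ℂ) :=
  Equiv.ofBijective ![φ, σ, conjugate σ] <|
    (Fintype.bijective_iff_injective_and_card _).2
      ⟨injective_embeddings_of_isReal hφ hσ, by rw [Fintype.card_fin, Embeddings.card, hdeg]⟩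

theorem abs_norm_eq_mul_sq (hdeg : Module.finrank ℚ K = 3) (hφ : IsReal φ) (hσ : ¬ IsReal σ)
    (x : K) : |(Algebra.norm ℚ x : ℝ)| = ‖φ x‖ * ‖σ x‖ ^ 2 := by
  have h := congrArg norm (Algebra.norm_eq_prod_embeddings ℚ ℂ x)
  rw [← ((cubicEmbeddingsEquiv hdeg hφ hσ).trans (RingHom.equivRatAlgHom K ℂ)).prod_comp,
    Fin.prod_univ_three] at h
  simp only [eq_ratCast, Complex.norm_ratCast, cubicEmbeddingsEquiv, Fin.isValue, Equiv.trans_apply,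
    Equiv.ofBijective_apply, Matrix.cons_val_zero, RingHom.equivRatAlgHom_apply,
    RingHom.toRatAlgHom_apply, Matrix.cons_val_one, Matrix.cons_val, conjugate_coe_eq,
    Complex.norm_mul, RCLike.norm_conj] at h
  rw [h]
  ring

theorem abs_discr_eq {α : K} {b : Module.Basis (Fin 3) ℚ K} (hb : ∀ i, b i = α ^ (i : ℕ))
    (hφ : IsReal φ) (hσ : ¬ IsReal σ) :
    |(Algebra.discr ℚ b : ℝ)| = ‖σ α - φ α‖ ^ 4 * ‖conjugate σ α - σ α‖ ^ 2 := by
  have hdeg : Module.finrank ℚ K = 3 := by simpa using Module.finrank_eq_card_basis b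
  have h := congrArg norm <| Algebra.discr_powerBasis_eq_prod ℚ ℂ ⟨α, 3, b, hb⟩
    ((cubicEmbeddingsEquiv hdeg hφ hσ).trans (RingHom.equivRatAlgHom K ℂ))
  have hI₁ : Finset.Ioi (1 : Fin 3) = {2} := by decide
  have hI₂ : Finset.Ioi (2 : Fin 3) = ∅ := by decide
  simp only [eq_ratCast, Complex.norm_ratCast, cubicEmbeddingsEquiv, Equiv.trans_apply,
    Equiv.ofBijective_apply, RingHom.equivRatAlgHom_apply, RingHom.toRatAlgHom_apply,
    Fin.prod_univ_three, Fin.isValue, Fin.Ioi_zero_eq_map, Nat.reduceAdd, Matrix.cons_val_zero,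
    Finset.prod_map, Fin.coe_succEmb, Matrix.cons_val_succ, Fin.prod_univ_two, Matrix.cons_val_one,
    Matrix.cons_val_fin_one, conjugate_coe_eq, hI₁, Finset.prod_singleton, Matrix.cons_val, hI₂,
    Finset.prod_empty, mul_one, Complex.norm_mul, norm_pow] at h
  rw [h, ← conjugate_coe_eq, norm_conjugate_sub_eq hφ]
  ring

end CubicEmbeddings

theorem exists_not_isReal {K : Type*} [Field K] [NumberField K]
    (h : InfinitePlace.nrComplexPlaces K ≠ 0) : ∃ σ : K →+* ℂ, ¬ IsReal σ := by
  classical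
  obtain ⟨⟨σ, hσ⟩⟩ := Fintype.card_pos_iff.1 <| (InfinitePlace.card_complex_embeddings K).symm ▸
    Nat.mul_pos two_pos (Nat.pos_of_ne_zero h)
  exact ⟨σ, hσ⟩

theorem exists_zpow_norm_apply_mul_mem_Ico {K : Type*} [Field K] (φ : K →+* ℂ) {η : (𝓞 K)ˣ}
    (hη : 1 < ‖φ ((η : 𝓞 K) : K)‖) {ξ : K} (hξ : ξ ≠ 0) {L : ℝ} (hL : 0 < L) :
    ∃ n : ℤ, L / ‖φ ((η : 𝓞 K) : K)‖ ≤ ‖φ (ξ * (((η ^ n : (𝓞 K)ˣ) : 𝓞 K) : K))‖ ∧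
      ‖φ (ξ * (((η ^ n : (𝓞 K)ˣ) : 𝓞 K) : K))‖ < L := by
  simp only [Units.coe_zpow, map_mul, map_zpow₀, norm_mul, norm_zpow]
  exact exists_mul_zpow_mem_Ico hη (norm_pos_iff.2 ((map_ne_zero φ).2 hξ)) hL

theorem abs_norm_mul_unit {K : Type*} [Field K] [NumberField K] (ξ : K) (ε : (𝓞 K)ˣ) :
    |Algebra.norm ℚ (ξ * ε)| = |Algebra.norm ℚ ξ| := by
  rw [map_mul, abs_mul, Units.norm, mul_one]

theorem stmt_15_general (K : Type*) [Field K] [NumberField K]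
    (α : K)
    (hcomplex : NumberField.InfinitePlace.nrComplexPlaces K = 1)
    (φ : K →+* ℂ) (hφ : ∀ x, (φ x).im = 0)
    (η : (𝓞 K)ˣ)
    (hη : 1 < ‖φ ((η : 𝓞 K) : K)‖)
    (b : Module.Basis (Fin 3) ℚ K) (hb : ∀ i : Fin 3, b i = α ^ (i : ℕ))
    (ξ : K) (k : ℝ) (hk : 0 < k) (hkξ : k = |(Algebra.norm ℚ ξ : ℝ)|) :
    ∃ ε : (𝓞 K)ˣ,
      |(b.repr (ξ * ((ε : 𝓞 K) : K)) 2 : ℝ)| ≤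
        (k * ‖φ ((η : 𝓞 K) : K)‖ / |((Algebra.discr ℚ ![1, α, α ^ 2] : ℚ) : ℝ)|)
            ^ ((1 : ℝ) / 3) *
          (2 + 1 / ‖φ ((η : 𝓞 K) : K)‖) := by
  have hdeg : Module.finrank ℚ K = 3 := by simpa using Module.finrank_eq_card_basis b
  have hφR : IsReal φ := isReal_iff.2 (RingHom.ext fun x => Complex.conj_eq_iff_im.2 (hφ x))
  obtain ⟨σ, hσ⟩ := exists_not_isReal (K := K) (by rw [hcomplex]; norm_num)
  obtain ⟨h₁, h₂⟩ := norm_sub_pos_of_basis_pow hb hφR hσ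
  set u := ‖φ ((η : 𝓞 K) : K)‖
  set A := ‖σ α - φ α‖ ^ 2
  set B := ‖σ α - φ α‖ * ‖conjugate σ α - σ α‖
  have hΔ : |((Algebra.discr ℚ ![1, α, α ^ 2] : ℚ) : ℝ)| = A * B ^ 2 := by
    have hb' : ![1, α, α ^ 2] = ⇑b := by ext i; fin_cases i <;> simp [hb]
    rw [hb', abs_discr_eq hb hφR hσ]; ring
  rw [hΔ]
  set T := (k * u / (A * B ^ 2)) ^ ((1 : ℝ) / 3)
  have hT3 : T ^ 3 = k * u / (A * B ^ 2) := by
    rw [← Real.rpow_natCast, ← Real.rpow_mul (by positivity)]; norm_num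
  have hξ : ξ ≠ 0 := by rintro rfl; simp [hkξ] at hk
  obtain ⟨n, hn₁, hn₂⟩ :=
    exists_zpow_norm_apply_mul_mem_Ico φ hη hξ (show 0 < A * T by positivity)
  refine ⟨η ^ n, ?_⟩
  set x := ξ * (((η ^ n : (𝓞 K)ˣ) : 𝓞 K) : K)
  have hnorm : ‖σ x‖ ^ 2 * ‖φ x‖ = k := by
    rw [hkξ, ← Rat.cast_abs, ← abs_norm_mul_unit, Rat.cast_abs,
      abs_norm_eq_mul_sq hdeg hφR hσ, mul_comm]
  calc |(b.repr x 2 : ℝ)| ≤ ‖φ x‖ / A + 2 * ‖σ x‖ / B := abs_repr_two_le hb hφR hσ x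
    _ ≤ T * (2 + 1 / u) := div_add_two_mul_div_le (by positivity) (by positivity)
        (by positivity) (by positivity) hT3 hn₁ hn₂.le (norm_nonneg _) hnorm

/-- In a complex cubic field `K = ℚ(α)` with real embedding `φ` and fundamental
unit `η` with `|φ(η)| > 1`, every `ξ ∈ K` of norm `±k ≠ 0` can be multiplied by
a unit `ε` so that, writing `ξ ε = a + b α + c α²`, one has
`|c| ≤ (k |φ(η)| / |Δ|)^{1/3} (2 + 1/|φ(η)|)` with `Δ = disc(1, α, α²)`. -/
theorem stmt_15 (K : Type*) [Field K] [NumberField K]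
    (α : K) (hα : IsIntegral ℤ α) (hgen : Algebra.adjoin ℚ {α} = ⊤)
    (hdeg : Module.finrank ℚ K = 3)
    (hcomplex : NumberField.InfinitePlace.nrComplexPlaces K = 1)
    (φ : K →+* ℂ) (hφ : ∀ x, (φ x).im = 0)
    (hΔ : Algebra.discr ℚ ![1, α, α ^ 2] ≠ 0)
    (η : (𝓞 K)ˣ)
    (hfund : ∀ u : (𝓞 K)ˣ, ∃ (ζ : (𝓞 K)ˣ) (m : ℤ), IsOfFinOrder ζ ∧ u = ζ * η ^ m)
    (hη : 1 < ‖φ ((η : 𝓞 K) : K)‖)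
    (b : Module.Basis (Fin 3) ℚ K) (hb : ∀ i : Fin 3, b i = α ^ (i : ℕ))
    (ξ : K) (k : ℝ) (hk : 0 < k) (hkξ : k = |(Algebra.norm ℚ ξ : ℝ)|) :
    ∃ ε : (𝓞 K)ˣ,
      |(b.repr (ξ * ((ε : 𝓞 K) : K)) 2 : ℝ)| ≤
        (k * ‖φ ((η : 𝓞 K) : K)‖ / |((Algebra.discr ℚ ![1, α, α ^ 2] : ℚ) : ℝ)|)
            ^ ((1 : ℝ) / 3) *
          (2 + 1 / ‖φ ((η : 𝓞 K) : K)‖) :=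
  stmt_15_general K α hcomplex φ hφ η hη b hb ξ k hk hkξ
end

section
/- Let K = ℚ(α) be a totally real cubic number field, where α is an algebraic integer with conjugates α, α', α'', let Δ = disc(1, α, α²) > 0, and let η₁, η₂ ∈ O_K^× be multiplicatively independent units. For a unit ε and a real embedding, set γ(ε) = |ε| if |ε| ≥ 1 and γ(ε) = |ε|⁻¹ otherwise, and write γ₁ = γ(η₁), γ₂ = γ(η₂) for the first embedding and γ₁', γ₂' for the second embedding. Then for every ξ ∈ K with |N_{K/ℚ}(ξ)| = k > 0 there exists a unit ε in the subgroup generated by η₁ and η₂ such that, writing ξ·ε = a + bα + cα² with a, b, c ∈ ℚ, one has |c| ≤ 3·(k·γ₁γ₂γ₁'γ₂'/Δ)^{1/3}. -/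
open NumberField

/-- `gammaVal v` is `|v|` if `|v| ≥ 1` and `|v|⁻¹` otherwise. -/
noncomputable def gammaVal (v : ℝ) : ℝ := if 1 ≤ |v| then |v| else |v|⁻¹

open Finset

/-!
Taking `log |·|` at the three real embeddings turns multiplication by `η₁ ^ m * η₂ ^ n` into
translation by `m • u + n • w`, where the log vectors `u`, `w` of the units lie in the plane
`∑ xᵢ = 0`. They are linearly independent over `ℝ`: their `ℤ`-span is discrete, since only finitely
many units are bounded at every embedding, and it has rank two because `η₁`, `η₂` are independent.
Rounding the real solution of a `2 × 2` system therefore moves the log vector of `ξ` below any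
target `(log Tᵢ)ᵢ` with `∑ log Tᵢ ≥ log k + |u₀| + |w₀| + |u₁| + |w₁|`. If `V` is the Vandermonde
product of `α, α', α''`, then `V² = Δ` and Cramer's rule gives `c V = ∑ (ξε)⁽ⁱ⁾ (α⁽ⁱ⁻¹⁾ - α⁽ⁱ⁺¹⁾)`,
so the targets `Tᵢ = ρ |V| / |α⁽ⁱ⁺¹⁾ - α⁽ⁱ⁺²⁾|` with `ρ³ = k γ₁ γ₂ γ₁' γ₂' / Δ` give `|c| ≤ 3 ρ`.
-/

theorem log_gammaVal {v : ℝ} (hv : v ≠ 0) : Real.log (gammaVal v) = abs (Real.log |v|) := by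
  unfold gammaVal
  split_ifs with h
  · exact (abs_of_nonneg (Real.log_nonneg h)).symm
  · rw [Real.log_inv, abs_of_neg (Real.log_neg (abs_pos.mpr hv) (not_le.mp h))]

theorem gammaVal_pos {v : ℝ} (hv : v ≠ 0) : 0 < gammaVal v := by
  have := abs_pos.mpr hv
  unfold gammaVal
  split_ifs <;> positivity

theorem abs_round_mul_add_round_mul_sub_le (a c u w : ℝ) :
    |round a * u + round c * w - (a * u + c * w)| ≤ (|u| + |w|) / 2 := by
  have ha : |(round a - a) * u| ≤ |u| / 2 := by
    rw [abs_mul, abs_sub_comm]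
    nlinarith [abs_sub_round a, abs_nonneg u]
  have hc : |(round c - c) * w| ≤ |w| / 2 := by
    rw [abs_mul, abs_sub_comm]
    nlinarith [abs_sub_round c, abs_nonneg w]
  calc |round a * u + round c * w - (a * u + c * w)|
      = |(round a - a) * u + (round c - c) * w| := by ring_nf
    _ ≤ (|u| + |w|) / 2 := by linarith [abs_add_le ((round a - a) * u) ((round c - c) * w)]

theorem exists_int_mul_add_int_mul_near {u₀ u₁ w₀ w₁ : ℝ} (hdet : u₀ * w₁ - u₁ * w₀ ≠ 0)
    (p q : ℝ) : ∃ m n : ℤ, |m * u₀ + n * w₀ - p| ≤ (|u₀| + |w₀|) / 2 ∧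
      |m * u₁ + n * w₁ - q| ≤ (|u₁| + |w₁|) / 2 := by
  obtain ⟨a, c, hp, hq⟩ : ∃ a c : ℝ, a * u₀ + c * w₀ = p ∧ a * u₁ + c * w₁ = q :=
    ⟨(p * w₁ - q * w₀) / (u₀ * w₁ - u₁ * w₀), (u₀ * q - u₁ * p) / (u₀ * w₁ - u₁ * w₀),
      by rw [div_mul_eq_mul_div, div_mul_eq_mul_div, ← add_div, div_eq_iff hdet]; ring,
      by rw [div_mul_eq_mul_div, div_mul_eq_mul_div, ← add_div, div_eq_iff hdet]; ring⟩
  refine ⟨round a, round c, ?_, ?_⟩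
  · simpa only [hp] using abs_round_mul_add_round_mul_sub_le a c u₀ w₀
  · simpa only [hq] using abs_round_mul_add_round_mul_sub_le a c u₁ w₁

theorem exists_int_shift_le {u w x t : Fin 3 → ℝ} (hu : ∑ i, u i = 0) (hw : ∑ i, w i = 0)
    (hdet : u 0 * w 1 - u 1 * w 0 ≠ 0)
    (hxt : ∑ i, x i + (|u 0| + |w 0| + |u 1| + |w 1|) ≤ ∑ i, t i) :
    ∃ m n : ℤ, ∀ i, x i + m * u i + n * w i ≤ t i := by
  obtain ⟨m, n, h₀, h₁⟩ := exists_int_mul_add_int_mul_near hdet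
    (t 0 - x 0 - (|u 0| + |w 0|) / 2) (t 1 - x 1 - (|u 1| + |w 1|) / 2)
  rw [abs_le] at h₀ h₁
  simp only [Fin.sum_univ_three] at hu hw hxt
  refine ⟨m, n, fun i ↦ ?_⟩
  fin_cases i
  · dsimp; linarith
  · dsimp; linarith
  · dsimp
    -- the slack left in the first two coordinates is what the third one needs
    have h₂ : x 2 + m * u 2 + n * w 2 = (x 0 + x 1 + x 2) - (x 0 + m * u 0 + n * w 0)
        - (x 1 + m * u 1 + n * w 1) := by linear_combination m * hu + n * hw
    linarith

theorem mul_sub_mul_ne_zero_of_linearIndependent {u w : Fin 3 → ℝ} (hu : ∑ i, u i = 0)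
    (hw : ∑ i, w i = 0) (h : LinearIndependent ℝ ![u, w]) : u 0 * w 1 - u 1 * w 0 ≠ 0 := by
  intro hdet
  simp only [Fin.sum_univ_three] at hu hw
  have key : ∀ s t : ℝ, s * u 0 + t * w 0 = 0 → s * u 1 + t * w 1 = 0 → s = 0 ∧ t = 0 := by
    intro s t h₀ h₁
    refine LinearIndependent.pair_iff.mp h s t (funext fun i ↦ ?_)
    have h₂ : s * u 2 + t * w 2 = 0 := by linear_combination s * hu + t * hw - h₀ - h₁
    fin_cases i <;> simpa
  obtain ⟨-, hu₁⟩ := key (w 1) (-u 1) (by linear_combination hdet) (by ring)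
  obtain ⟨-, hu₀⟩ := key (w 0) (-u 0) (by ring) (by linear_combination -hdet)
  exact one_ne_zero (key 1 0 (by linear_combination -hu₀) (by linear_combination -hu₁)).1

theorem discr_powerBasis_eq_sq_prod {K : Type*} [Field K] [NumberField K] (pb : PowerBasis ℚ K)
    {φ : Fin pb.dim → K →+* ℝ} (hφ : Function.Bijective fun i ↦ Complex.ofRealHom.comp (φ i)) :
    (Algebra.discr ℚ pb.basis : ℝ) =
      (∏ i, ∏ j ∈ Ioi i, (φ j pb.gen - φ i pb.gen)) ^ 2 := by
  apply Complex.ofReal_injective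
  have := Algebra.discr_powerBasis_eq_prod ℚ ℂ pb
    ((Equiv.ofBijective _ hφ).trans (RingHom.equivRatAlgHom K ℂ))
  push_cast
  convert this using 1
  · simp
  · simp only [← prod_pow]
    rfl

section RealEmbeddings

variable {K : Type*} [Field K] {ι : Type*} {φ : ι → K →+* ℝ}

noncomputable def logAbs (φ : ι → K →+* ℝ) (x : K) : ι → ℝ := fun i ↦ Real.log |φ i x|

theorem logAbs_mul {x y : K} (hx : x ≠ 0) (hy : y ≠ 0) :
    logAbs φ (x * y) = logAbs φ x + logAbs φ y := by
  ext i
  simp [logAbs, abs_mul, Real.log_mul, hx, hy]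

theorem logAbs_units_zpow_mul_zpow (η₁ η₂ : (𝓞 K)ˣ) (m n : ℤ) :
    logAbs φ ((η₁ ^ m * η₂ ^ n : (𝓞 K)ˣ) : 𝓞 K) =
      m • logAbs φ ((η₁ : 𝓞 K) : K) + n • logAbs φ ((η₂ : 𝓞 K) : K) := by
  have hcoe : ((η₁ ^ m * η₂ ^ n : (𝓞 K)ˣ) : 𝓞 K) =
      ((η₁ : 𝓞 K) : K) ^ m * ((η₂ : 𝓞 K) : K) ^ n := by
    show ((η₁ ^ m * η₂ ^ n : (𝓞 K)ˣ) : K) = (η₁ : K) ^ m * (η₂ : K) ^ n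
    rw [Units.coe_mul, Units.coe_zpow, Units.coe_zpow]
  ext i
  have h₁ := abs_ne_zero.mpr ((map_ne_zero (φ i)).mpr (Units.coe_ne_zero η₁))
  have h₂ := abs_ne_zero.mpr ((map_ne_zero (φ i)).mpr (Units.coe_ne_zero η₂))
  rw [Pi.add_apply, Pi.smul_apply, Pi.smul_apply]
  simp only [logAbs, hcoe, map_mul, map_zpow₀, abs_mul, abs_zpow, zsmul_eq_mul,
    Real.log_mul (zpow_ne_zero m h₁) (zpow_ne_zero n h₂), Real.log_zpow]

variable [NumberField K]

theorem bijective_ofRealHom_comp [Fintype ι] (hφ : Function.Injective φ)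
    (hcard : Fintype.card ι = Module.finrank ℚ K) :
    Function.Bijective fun i ↦ Complex.ofRealHom.comp (φ i) := by
  refine (Fintype.bijective_iff_injective_and_card _).mpr ⟨fun i j h ↦ hφ ?_, ?_⟩
  · ext x
    exact Complex.ofReal_injective (RingHom.congr_fun h x)
  · rw [hcard, Embeddings.card K ℂ]

variable (hφ : Function.Bijective fun i ↦ Complex.ofRealHom.comp (φ i))
include hφ

theorem finite_units_abs_le (B : ℝ) :
    {ε : (𝓞 K)ˣ | ∀ i, |φ i ((ε : 𝓞 K) : K)| ≤ B}.Finite := by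
  refine Set.Finite.of_finite_image ?_ (Units.coe_injective K).injOn
  refine (Embeddings.finite_of_norm_le K ℂ B).subset ?_
  rintro _ ⟨ε, hε, rfl⟩
  refine ⟨RingOfIntegers.isIntegral_coe _, fun σ ↦ ?_⟩
  obtain ⟨i, rfl⟩ := hφ.2 σ
  simpa using hε i

theorem linearIndependent_int_logAbs {η₁ η₂ : (𝓞 K)ˣ}
    (hind : ∀ m n : ℤ, η₁ ^ m * η₂ ^ n = 1 → m = 0 ∧ n = 0) :
    LinearIndependent ℤ ![logAbs φ ((η₁ : 𝓞 K) : K), logAbs φ ((η₂ : 𝓞 K) : K)] := by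
  refine LinearIndependent.pair_iff.mpr fun m n h ↦ ?_
  rw [← logAbs_units_zpow_mul_zpow] at h
  obtain ⟨r, hr, hpow⟩ := Embeddings.pow_eq_one_of_norm_eq_one K ℂ
    (RingOfIntegers.isIntegral_coe ((η₁ ^ m * η₂ ^ n : (𝓞 K)ˣ) : 𝓞 K)) fun σ ↦ by
      obtain ⟨i, rfl⟩ := hφ.2 σ
      have hε := (map_ne_zero (φ i)).mpr (Units.coe_ne_zero (η₁ ^ m * η₂ ^ n))
      simpa using Real.eq_one_of_pos_of_log_eq_zero (abs_pos.mpr hε) (congrFun h i)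
  have h1 : η₁ ^ (r * m) * η₂ ^ (r * n) = 1 := by
    have : (η₁ ^ m * η₂ ^ n) ^ r = 1 := Units.coe_injective K (by simpa using hpow)
    rw [← this, ← zpow_natCast, mul_zpow, ← zpow_mul, ← zpow_mul, mul_comm m, mul_comm n]
  obtain ⟨hm, hn⟩ := hind _ _ h1
  have hr' : (r : ℤ) ≠ 0 := by exact_mod_cast hr.ne'
  exact ⟨(mul_eq_zero.mp hm).resolve_left hr', (mul_eq_zero.mp hn).resolve_left hr'⟩

variable [Fintype ι]

theorem norm_eq_prod_realEmbeddings (x : K) : (Algebra.norm ℚ x : ℝ) = ∏ i, φ i x := by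
  apply Complex.ofReal_injective
  calc ((Algebra.norm ℚ x : ℝ) : ℂ) = ∏ σ : K →ₐ[ℚ] ℂ, σ x := by
        rw [← Algebra.norm_eq_prod_embeddings ℚ ℂ x]; simp
    _ = ∏ σ : K →+* ℂ, σ x :=
        (Fintype.prod_equiv (RingHom.equivRatAlgHom K ℂ) _ _ fun _ ↦ rfl).symm
    _ = _ := by
        rw [Complex.ofReal_prod]
        exact (Fintype.prod_bijective _ hφ _ _ fun _ ↦ rfl).symm

theorem sum_logAbs {x : K} (hx : x ≠ 0) :
    ∑ i, logAbs φ x i = Real.log |(Algebra.norm ℚ x : ℝ)| := by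
  rw [norm_eq_prod_realEmbeddings hφ, abs_prod, Real.log_prod fun i _ ↦ by simpa using hx]
  rfl

theorem sum_logAbs_units (ε : (𝓞 K)ˣ) : ∑ i, logAbs φ ((ε : 𝓞 K) : K) i = 0 := by
  rw [sum_logAbs hφ (Units.coe_ne_zero ε), Real.log_eq_zero]
  exact Or.inr (Or.inl (by exact_mod_cast Units.norm K ε))

theorem discreteTopology_span_logAbs (η₁ η₂ : (𝓞 K)ˣ) :
    DiscreteTopology (Submodule.span ℤ
      (Set.range ![logAbs φ ((η₁ : 𝓞 K) : K), logAbs φ ((η₂ : 𝓞 K) : K)])) := by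
  refine discreteTopology_of_isOpen_singleton_zero <| isOpen_singleton_of_finite_mem_nhds 0
    (Metric.closedBall_mem_nhds _ one_pos) ?_
  refine Set.Finite.of_finite_image ?_ Subtype.val_injective.injOn
  refine (Set.Finite.image (fun ε : (𝓞 K)ˣ ↦ logAbs φ ((ε : 𝓞 K) : K))
    (finite_units_abs_le hφ (Real.exp 1))).subset ?_
  rintro _ ⟨⟨v, hv⟩, hv1, rfl⟩
  rw [Matrix.range_cons_cons_empty, Submodule.mem_span_pair] at hv
  obtain ⟨m, n, rfl⟩ := hv
  refine ⟨η₁ ^ m * η₂ ^ n, fun i ↦ ?_, logAbs_units_zpow_mul_zpow η₁ η₂ m n⟩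
  have hε := (map_ne_zero (φ i)).mpr (Units.coe_ne_zero (η₁ ^ m * η₂ ^ n))
  rw [← Real.log_le_iff_le_exp (abs_pos.mpr hε)]
  have hi : ‖(m • logAbs φ ((η₁ : 𝓞 K) : K) + n • logAbs φ ((η₂ : 𝓞 K) : K)) i‖ ≤ 1 :=
    (norm_le_pi_norm _ i).trans (mem_closedBall_zero_iff.mp hv1)
  rw [← logAbs_units_zpow_mul_zpow η₁ η₂ m n, Real.norm_eq_abs] at hi
  exact (le_abs_self _).trans hi

theorem linearIndependent_logAbs {η₁ η₂ : (𝓞 K)ˣ}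
    (hind : ∀ m n : ℤ, η₁ ^ m * η₂ ^ n = 1 → m = 0 ∧ n = 0) :
    LinearIndependent ℝ ![logAbs φ ((η₁ : 𝓞 K) : K), logAbs φ ((η₂ : 𝓞 K) : K)] := by
  rw [linearIndependent_iff_card_eq_finrank_span,
    Real.finrank_eq_int_finrank_of_discrete (discreteTopology_span_logAbs hφ η₁ η₂)]
  exact linearIndependent_iff_card_eq_finrank_span.mp (linearIndependent_int_logAbs hφ hind)

end RealEmbeddings

section Cubic

variable {K : Type*} [Field K] [NumberField K] {φ : Fin 3 → K →+* ℝ}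
  {α : K} {b : Module.Basis (Fin 3) ℚ K}

theorem discr_powers_eq_sq_prod_sub
    (hφ : Function.Bijective fun i ↦ Complex.ofRealHom.comp (φ i))
    (hb : ∀ i : Fin 3, b i = α ^ (i : ℕ)) :
    ((Algebra.discr ℚ ![1, α, α ^ 2] : ℚ) : ℝ) =
      ((φ 0 α - φ 1 α) * (φ 1 α - φ 2 α) * (φ 2 α - φ 0 α)) ^ 2 := by
  have hb' : ⇑b = ![1, α, α ^ 2] := by ext i; fin_cases i <;> simp [hb]
  rw [← hb', discr_powerBasis_eq_sq_prod ⟨α, 3, b, hb⟩ hφ]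
  simp only [Fin.prod_univ_succ, Fin.prod_Ioi_zero, Fin.prod_Ioi_succ, Fin.prod_univ_zero,
    Fin.succ_zero_eq_one, Fin.succ_one_eq_two, mul_one]
  ring

theorem exists_zpow_mul_abs_le (hφ : Function.Bijective fun i ↦ Complex.ofRealHom.comp (φ i))
    {η₁ η₂ : (𝓞 K)ˣ} (hind : ∀ m n : ℤ, η₁ ^ m * η₂ ^ n = 1 → m = 0 ∧ n = 0)
    {ξ : K} (hξ : ξ ≠ 0) {T : Fin 3 → ℝ} (hT : ∀ i, 0 < T i)
    (hprod : |(Algebra.norm ℚ ξ : ℝ)| *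
      (gammaVal (φ 0 ((η₁ : 𝓞 K) : K)) * gammaVal (φ 0 ((η₂ : 𝓞 K) : K)) *
        gammaVal (φ 1 ((η₁ : 𝓞 K) : K)) * gammaVal (φ 1 ((η₂ : 𝓞 K) : K))) ≤ ∏ i, T i) :
    ∃ m n : ℤ, ∀ i, |φ i (ξ * ((η₁ ^ m * η₂ ^ n : (𝓞 K)ˣ) : 𝓞 K))| ≤ T i := by
  set u := logAbs φ ((η₁ : 𝓞 K) : K)
  set w := logAbs φ ((η₂ : 𝓞 K) : K)
  have hu := sum_logAbs_units hφ η₁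
  have hw := sum_logAbs_units hφ η₂
  have hdet := mul_sub_mul_ne_zero_of_linearIndependent hu hw (linearIndependent_logAbs hφ hind)
  have hφ₁ : ∀ i, φ i ((η₁ : 𝓞 K) : K) ≠ 0 := fun i ↦ (map_ne_zero _).mpr (Units.coe_ne_zero η₁)
  have hφ₂ : ∀ i, φ i ((η₂ : 𝓞 K) : K) ≠ 0 := fun i ↦ (map_ne_zero _).mpr (Units.coe_ne_zero η₂)
  have hN : 0 < |(Algebra.norm ℚ ξ : ℝ)| := by simpa using hξ
  have hxt : ∑ i, logAbs φ ξ i + (|u 0| + |w 0| + |u 1| + |w 1|) ≤ ∑ i, Real.log (T i) := by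
    rw [sum_logAbs hφ hξ, ← Real.log_prod fun i _ ↦ (hT i).ne']
    have := gammaVal_pos (hφ₁ 0)
    have := gammaVal_pos (hφ₂ 0)
    have := gammaVal_pos (hφ₁ 1)
    have := gammaVal_pos (hφ₂ 1)
    refine le_of_eq_of_le ?_ (Real.log_le_log (by positivity) hprod)
    rw [Real.log_mul, Real.log_mul, Real.log_mul, Real.log_mul, log_gammaVal (hφ₁ 0),
      log_gammaVal (hφ₂ 0), log_gammaVal (hφ₁ 1), log_gammaVal (hφ₂ 1)]
    · rfl
    all_goals positivity
  obtain ⟨m, n, hmn⟩ := exists_int_shift_le hu hw hdet hxt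
  refine ⟨m, n, fun i ↦ ?_⟩
  have hε := Units.coe_ne_zero (η₁ ^ m * η₂ ^ n)
  rw [← Real.log_le_log_iff (abs_pos.mpr ((map_ne_zero _).mpr (mul_ne_zero hξ hε))) (hT i)]
  have hlog := congrFun (logAbs_mul (φ := φ) hξ hε) i
  rw [logAbs_units_zpow_mul_zpow] at hlog
  exact (hlog.trans (by simp [add_assoc])).trans_le (hmn i)

theorem repr_two_mul_prod_sub (hb : ∀ i : Fin 3, b i = α ^ (i : ℕ)) (ζ : K) :
    (b.repr ζ 2 : ℝ) * ((φ 0 α - φ 1 α) * (φ 1 α - φ 2 α) * (φ 2 α - φ 0 α)) =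
      φ 0 ζ * (φ 2 α - φ 1 α) + φ 1 ζ * (φ 0 α - φ 2 α) + φ 2 ζ * (φ 1 α - φ 0 α) := by
  have h : ∀ i, φ i ζ = b.repr ζ 0 + b.repr ζ 1 * φ i α + b.repr ζ 2 * φ i α ^ 2 := by
    intro i
    conv_lhs => rw [← b.sum_repr ζ]
    simp [Fin.sum_univ_three, hb, Rat.smul_def]
  linear_combination (φ 1 α - φ 2 α) * h 0 + (φ 2 α - φ 0 α) * h 1 + (φ 0 α - φ 1 α) * h 2

theorem abs_repr_two_le_s16 (hb : ∀ i : Fin 3, b i = α ^ (i : ℕ))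
    (hP : 0 < |(φ 0 α - φ 1 α) * (φ 1 α - φ 2 α) * (φ 2 α - φ 0 α)|) {ζ : K} {ρ : ℝ}
    (h : ∀ i, |φ i ζ| * |φ (i + 1) α - φ (i + 2) α| ≤
      ρ * |(φ 0 α - φ 1 α) * (φ 1 α - φ 2 α) * (φ 2 α - φ 0 α)|) :
    |(b.repr ζ 2 : ℝ)| ≤ 3 * ρ := by
  refine le_of_mul_le_mul_right ?_ hP
  rw [← abs_mul, repr_two_mul_prod_sub hb ζ]
  have h₀ := h 0
  have h₁ := h 1
  have h₂ := h 2
  simp only [Fin.reduceAdd] at h₀ h₁ h₂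
  calc _ ≤ |φ 0 ζ * (φ 2 α - φ 1 α)| + |φ 1 ζ * (φ 0 α - φ 2 α)| + |φ 2 ζ * (φ 1 α - φ 0 α)| :=
        abs_add_three _ _ _
    _ ≤ _ := by
        rw [abs_mul, abs_mul, abs_mul, abs_sub_comm (φ 2 α) (φ 1 α),
          abs_sub_comm (φ 0 α) (φ 2 α), abs_sub_comm (φ 1 α) (φ 0 α)]
        linarith

theorem exists_zpow_mul_abs_repr_two_le
    (hφ : Function.Bijective fun i ↦ Complex.ofRealHom.comp (φ i))
    {η₁ η₂ : (𝓞 K)ˣ} (hind : ∀ m n : ℤ, η₁ ^ m * η₂ ^ n = 1 → m = 0 ∧ n = 0)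
    (hb : ∀ i : Fin 3, b i = α ^ (i : ℕ))
    (hP : 0 < |(φ 0 α - φ 1 α) * (φ 1 α - φ 2 α) * (φ 2 α - φ 0 α)|)
    {ξ : K} (hξ : ξ ≠ 0) {ρ : ℝ} (hρ : 0 < ρ)
    (hρ3 : |(Algebra.norm ℚ ξ : ℝ)| *
      (gammaVal (φ 0 ((η₁ : 𝓞 K) : K)) * gammaVal (φ 0 ((η₂ : 𝓞 K) : K)) *
        gammaVal (φ 1 ((η₁ : 𝓞 K) : K)) * gammaVal (φ 1 ((η₂ : 𝓞 K) : K))) ≤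
      ρ ^ 3 * ((φ 0 α - φ 1 α) * (φ 1 α - φ 2 α) * (φ 2 α - φ 0 α)) ^ 2) :
    ∃ m n : ℤ, |(b.repr (ξ * ((η₁ ^ m * η₂ ^ n : (𝓞 K)ˣ) : 𝓞 K)) 2 : ℝ)| ≤ 3 * ρ := by
  set P := (φ 0 α - φ 1 α) * (φ 1 α - φ 2 α) * (φ 2 α - φ 0 α)
  set d : Fin 3 → ℝ := fun i ↦ |φ (i + 1) α - φ (i + 2) α|
  have hd : ∏ i, d i = |P| := by
    simp only [d, P, Fin.prod_univ_three, Fin.reduceAdd, zero_add, abs_mul]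
    ring
  have hd₀ : ∀ i, 0 < d i := fun i ↦ (abs_nonneg _).lt_of_ne' fun h ↦
    hP.ne' (hd ▸ prod_eq_zero (mem_univ i) h)
  obtain ⟨m, n, hmn⟩ := exists_zpow_mul_abs_le hφ hind hξ (T := fun i ↦ ρ * |P| / d i)
    (fun i ↦ by have := hd₀ i; positivity) <| hρ3.trans_eq <| by
      rw [prod_div_distrib, prod_const, card_univ, Fintype.card_fin, hd, ← sq_abs P]
      field_simp
  exact ⟨m, n, abs_repr_two_le_s16 hb hP fun i ↦ (le_div_iff₀ (hd₀ i)).mp (hmn i)⟩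

end Cubic

theorem stmt_16_general (K : Type*) [Field K] [NumberField K]
    (α : K)
    (hdeg : Module.finrank ℚ K = 3)
    (φ : Fin 3 → (K →+* ℝ)) (hφ : Function.Injective φ)
    (hΔ : 0 < Algebra.discr ℚ ![1, α, α ^ 2])
    (η₁ η₂ : (𝓞 K)ˣ)
    (hind : ∀ m n : ℤ, η₁ ^ m * η₂ ^ n = 1 → m = 0 ∧ n = 0)
    (b : Module.Basis (Fin 3) ℚ K) (hb : ∀ i : Fin 3, b i = α ^ (i : ℕ))
    (ξ : K) (k : ℝ) (hk : 0 < k) (hkξ : k = |(Algebra.norm ℚ ξ : ℝ)|) :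
    ∃ ε : (𝓞 K)ˣ, ε ∈ Subgroup.closure ({η₁, η₂} : Set (𝓞 K)ˣ) ∧
      |(b.repr (ξ * ((ε : 𝓞 K) : K)) 2 : ℝ)| ≤
        3 * (k * (gammaVal (φ 0 ((η₁ : 𝓞 K) : K)) * gammaVal (φ 0 ((η₂ : 𝓞 K) : K)) *
              gammaVal (φ 1 ((η₁ : 𝓞 K) : K)) * gammaVal (φ 1 ((η₂ : 𝓞 K) : K))) /
            ((Algebra.discr ℚ ![1, α, α ^ 2] : ℚ) : ℝ)) ^ ((1 : ℝ) / 3) := by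
  have hφc := bijective_ofRealHom_comp hφ (by rw [Fintype.card_fin, hdeg])
  have hξ : ξ ≠ 0 := by rintro rfl; simp [hkξ] at hk
  have hΔP := discr_powers_eq_sq_prod_sub hφc hb
  have hΔ' : (0 : ℝ) < (Algebra.discr ℚ ![1, α, α ^ 2] : ℚ) := by exact_mod_cast hΔ
  have hP : 0 < |(φ 0 α - φ 1 α) * (φ 1 α - φ 2 α) * (φ 2 α - φ 0 α)| :=
    abs_pos.mpr fun h ↦ by simp [hΔP, h] at hΔ'
  set Γ := gammaVal (φ 0 ((η₁ : 𝓞 K) : K)) * gammaVal (φ 0 ((η₂ : 𝓞 K) : K)) *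
    gammaVal (φ 1 ((η₁ : 𝓞 K) : K)) * gammaVal (φ 1 ((η₂ : 𝓞 K) : K))
  have hΓ : 0 < Γ := by
    have h (i : Fin 3) (η : (𝓞 K)ˣ) := gammaVal_pos ((map_ne_zero (φ i)).mpr (Units.coe_ne_zero η))
    exact mul_pos (mul_pos (mul_pos (h 0 η₁) (h 0 η₂)) (h 1 η₁)) (h 1 η₂)
  set ρ := (k * Γ / ((Algebra.discr ℚ ![1, α, α ^ 2] : ℚ) : ℝ)) ^ ((1 : ℝ) / 3)
  have hρ3 : k * Γ = ρ ^ 3 * ((φ 0 α - φ 1 α) * (φ 1 α - φ 2 α) * (φ 2 α - φ 0 α)) ^ 2 := by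
    rw [← Real.rpow_natCast, ← Real.rpow_mul (by positivity), ← hΔP, Nat.cast_ofNat,
      one_div_mul_cancel three_ne_zero, Real.rpow_one, div_mul_cancel₀ _ hΔ'.ne']
  have hρ : 0 < ρ := Real.rpow_pos_of_pos (by positivity) _
  obtain ⟨m, n, h⟩ := exists_zpow_mul_abs_repr_two_le hφc hind hb hP hξ hρ (by rw [← hkξ, hρ3])
  refine ⟨η₁ ^ m * η₂ ^ n, ?_, h⟩
  exact Subgroup.mul_mem _ (Subgroup.zpow_mem _ (Subgroup.subset_closure (by simp)) m)
    (Subgroup.zpow_mem _ (Subgroup.subset_closure (by simp)) n)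

/-- In a totally real cubic field `K = ℚ(α)` with real embeddings `φ 0, φ 1, φ 2`
and multiplicatively independent units `η₁, η₂`, every `ξ ∈ K` of norm `±k ≠ 0`
can be multiplied by a unit `ε ∈ ⟨η₁, η₂⟩` so that, writing `ξ ε = a + b α + c α²`,
one has `|c| ≤ 3 (k γ₁ γ₂ γ₁' γ₂' / Δ)^{1/3}` with `Δ = disc(1, α, α²)`. -/
theorem stmt_16 (K : Type*) [Field K] [NumberField K]
    (α : K) (hα : IsIntegral ℤ α) (hgen : Algebra.adjoin ℚ {α} = ⊤)
    (hdeg : Module.finrank ℚ K = 3)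
    (φ : Fin 3 → (K →+* ℝ)) (hφ : Function.Injective φ)
    (hΔ : 0 < Algebra.discr ℚ ![1, α, α ^ 2])
    (η₁ η₂ : (𝓞 K)ˣ)
    (hind : ∀ m n : ℤ, η₁ ^ m * η₂ ^ n = 1 → m = 0 ∧ n = 0)
    (b : Module.Basis (Fin 3) ℚ K) (hb : ∀ i : Fin 3, b i = α ^ (i : ℕ))
    (ξ : K) (k : ℝ) (hk : 0 < k) (hkξ : k = |(Algebra.norm ℚ ξ : ℝ)|) :
    ∃ ε : (𝓞 K)ˣ, ε ∈ Subgroup.closure ({η₁, η₂} : Set (𝓞 K)ˣ) ∧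
      |(b.repr (ξ * ((ε : 𝓞 K) : K)) 2 : ℝ)| ≤
        3 * (k * (gammaVal (φ 0 ((η₁ : 𝓞 K) : K)) * gammaVal (φ 0 ((η₂ : 𝓞 K) : K)) *
              gammaVal (φ 1 ((η₁ : 𝓞 K) : K)) * gammaVal (φ 1 ((η₂ : 𝓞 K) : K))) /
            ((Algebra.discr ℚ ![1, α, α ^ 2] : ℚ) : ℝ)) ^ ((1 : ℝ) / 3) :=
  stmt_16_general K α hdeg φ hφ hΔ η₁ η₂ hind b hb ξ k hk hkξ
end

section
/- Let α be a root of the irreducible polynomial f(x) = x³ + x² − 6x − 1 and K = ℚ(α), the totally real cubic field of discriminant 985, whose ring of integers is O_K = ℤ[α]. Let ξ₀ = (2 − α + 2α²)/5. Then |N_{K/ℚ}(ξ₀ − η)| ≥ 1 for every η ∈ O_K, and N_{K/ℚ}(ξ₀ − 2) = 1; in other words, the Euclidean minimum M(K, ξ₀) = inf{ |N_{K/ℚ}(ξ₀ − η)| : η ∈ O_K } equals 1 (so K is not norm-Euclidean). -/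
/-!
Write `ξ₀ - η = (a + bα + cα²)/5` with `(a, b, c) ≡ (2, -1, 2) mod 5`; its norm is `F(a, b, c)/125`,
where `F` is the norm form of `ℤ[α]`. On this coset `F = 25 g` with `g ≡ 0, ±2 mod 5`.
The primes `2` and `3` are inert (`F` has no nontrivial zero mod `2` or `3`), so `p ∣ F` forces
`p³ ∣ F` for `p = 2, 3`, which excludes `g = ±2, ±3`; and a `2`-adic descent shows that `F` has no
nontrivial integral zero, so `g ≠ 0`. Hence `|g| ≥ 5`, i.e. `|N(ξ₀ - η)| ≥ 1`.
-/

open Polynomial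

-- The determinant of multiplication by `a + bα + cα²` on the basis `1, α, α²` of `ℚ(α)`.
def normForm {R : Type*} [CommRing R] (a b c : R) : R :=
  a ^ 3 - a ^ 2 * b - 6 * a * b ^ 2 + b ^ 3 + 13 * a ^ 2 * c + 3 * a * b * c - b ^ 2 * c
    + 38 * a * c ^ 2 - 6 * b * c ^ 2 + c ^ 3

section NormForm

variable {R S : Type*} [CommRing R] [CommRing S]

theorem map_normForm (f : R →+* S) (a b c : R) :
    f (normForm a b c) = normForm (f a) (f b) (f c) := by
  simp only [normForm, map_add, map_sub, map_mul, map_pow, map_ofNat]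

theorem normForm_mul_mul_mul (k a b c : R) :
    normForm (k * a) (k * b) (k * c) = k ^ 3 * normForm a b c := by
  simp only [normForm]; ring

variable (R) in
def NormFormAnisotropic : Prop :=
  ∀ a b c : R, normForm a b c = 0 → a = 0 ∧ b = 0 ∧ c = 0

end NormForm

theorem normFormAnisotropic_zmod_two : NormFormAnisotropic (ZMod 2) := by
  unfold NormFormAnisotropic normForm; decide

theorem normFormAnisotropic_zmod_three : NormFormAnisotropic (ZMod 3) := by
  unfold NormFormAnisotropic normForm; decide

theorem dvd_of_dvd_normForm {p : ℕ} (hp : NormFormAnisotropic (ZMod p)) {a b c : ℤ}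
    (h : (p : ℤ) ∣ normForm a b c) : (p : ℤ) ∣ a ∧ (p : ℤ) ∣ b ∧ (p : ℤ) ∣ c := by
  simp only [← ZMod.intCast_zmod_eq_zero_iff_dvd] at h ⊢
  exact hp _ _ _ (by rwa [← eq_intCast (Int.castRingHom (ZMod p)), map_normForm] at h)

theorem pow_three_dvd_normForm {p : ℕ} (hp : NormFormAnisotropic (ZMod p)) {a b c : ℤ}
    (h : (p : ℤ) ∣ normForm a b c) : (p : ℤ) ^ 3 ∣ normForm a b c := by
  obtain ⟨⟨a, rfl⟩, ⟨b, rfl⟩, ⟨c, rfl⟩⟩ := dvd_of_dvd_normForm hp h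
  exact ⟨normForm a b c, normForm_mul_mul_mul _ _ _ _⟩

theorem normFormAnisotropic_int : NormFormAnisotropic ℤ := by
  have two_pow_dvd (k : ℕ) : ∀ a b c : ℤ, normForm a b c = 0 →
      2 ^ k ∣ a ∧ 2 ^ k ∣ b ∧ 2 ^ k ∣ c := by
    induction k with
    | zero => simp
    | succ k ih =>
      intro a b c h
      obtain ⟨⟨a, rfl⟩, ⟨b, rfl⟩, ⟨c, rfl⟩⟩ :=
        dvd_of_dvd_normForm normFormAnisotropic_zmod_two (h ▸ dvd_zero _)
      rw [normForm_mul_mul_mul, mul_eq_zero] at h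
      obtain ⟨ha, hb, hc⟩ := ih a b c (h.resolve_left (by norm_num))
      simp only [pow_succ']
      exact ⟨mul_dvd_mul_left _ ha, mul_dvd_mul_left _ hb, mul_dvd_mul_left _ hc⟩
  have eq_zero_of_forall_dvd (n : ℤ) (hn : ∀ k : ℕ, 2 ^ k ∣ n) : n = 0 :=
    Int.eq_zero_of_dvd_of_natAbs_lt_natAbs (hn n.natAbs) (by simpa using Nat.lt_two_pow_self)
  intro a b c h
  exact ⟨eq_zero_of_forall_dvd a fun k => (two_pow_dvd k a b c h).1,
    eq_zero_of_forall_dvd b fun k => (two_pow_dvd k a b c h).2.1,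
    eq_zero_of_forall_dvd c fun k => (two_pow_dvd k a b c h).2.2⟩

def cosetNormForm {R : Type*} [CommRing R] (u v w : R) : R :=
  17 - 52 * u - 3 * v - 77 * w + 33 * u ^ 2 + 14 * u * v - 17 * v ^ 2 + 201 * u * w - 16 * v * w
    + 88 * w ^ 2 - 5 * u ^ 3 + 5 * u ^ 2 * v + 30 * u * v ^ 2 - 5 * v ^ 3 - 65 * u ^ 2 * w
    - 15 * u * v * w + 5 * v ^ 2 * w - 190 * u * w ^ 2 + 30 * v * w ^ 2 - 5 * w ^ 3

theorem normForm_coset (u v w : ℤ) :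
    normForm (2 - 5 * u) (-1 - 5 * v) (2 - 5 * w) = 25 * cosetNormForm u v w := by
  simp only [normForm, cosetNormForm]; ring

theorem cosetNormForm_emod_five (u v w : ℤ) :
    cosetNormForm u v w % 5 = 0 ∨ cosetNormForm u v w % 5 = 2 ∨ cosetNormForm u v w % 5 = 3 := by
  have hzmod : ∀ u v w : ZMod 5, cosetNormForm u v w = ((0 : ℤ) : ZMod 5) ∨
      cosetNormForm u v w = ((2 : ℤ) : ZMod 5) ∨ cosetNormForm u v w = ((3 : ℤ) : ZMod 5) := by
    unfold cosetNormForm; decide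
  have hcast : ((cosetNormForm u v w : ℤ) : ZMod 5) = cosetNormForm (u : ZMod 5) v w := by
    simp [cosetNormForm]
  have h := hzmod u v w
  simp only [← hcast, ZMod.intCast_eq_intCast_iff'] at h
  omega

theorem le_abs_normForm_coset (u v w : ℤ) :
    125 ≤ |normForm (2 - 5 * u) (-1 - 5 * v) (2 - 5 * w)| := by
  have hne : normForm (2 - 5 * u) (-1 - 5 * v) (2 - 5 * w) ≠ 0 := fun h =>
    absurd (normFormAnisotropic_int _ _ _ h).2.2 (by omega)
  have h2 := pow_three_dvd_normForm (p := 2) normFormAnisotropic_zmod_two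
    (a := 2 - 5 * u) (b := -1 - 5 * v) (c := 2 - 5 * w)
  have h3 := pow_three_dvd_normForm (p := 3) normFormAnisotropic_zmod_three
    (a := 2 - 5 * u) (b := -1 - 5 * v) (c := 2 - 5 * w)
  have h5 := cosetNormForm_emod_five u v w
  rw [normForm_coset] at hne h2 h3 ⊢
  push_cast at h2 h3
  rw [abs_mul, abs_of_pos (by norm_num : (0 : ℤ) < 25)]
  rcases abs_cases (cosetNormForm u v w) with ⟨h, _⟩ | ⟨h, _⟩ <;> rw [h] <;> omega

noncomputable def cubicPoly (R : Type*) [CommRing R] : R[X] := X ^ 3 + X ^ 2 - 6 * X - 1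

section CubicPoly

variable (R : Type*) [CommRing R]

theorem cubicPoly_monic : (cubicPoly R).Monic := by
  nontriviality R
  unfold cubicPoly; monicity!

theorem natDegree_cubicPoly [Nontrivial R] : (cubicPoly R).natDegree = 3 := by
  unfold cubicPoly; compute_degree!

variable {R} in
@[simp]
theorem aeval_cubicPoly {A : Type*} [CommRing A] [Algebra R A] (x : A) :
    aeval x (cubicPoly R) = x ^ 3 + x ^ 2 - 6 * x - 1 := by
  simp [cubicPoly, map_ofNat]

end CubicPoly

theorem irreducible_cubicPoly : Irreducible (cubicPoly ℚ) := by
  refine irreducible_of_degree_le_three_of_not_isRoot (by simp [natDegree_cubicPoly]) fun r hr => ?_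
  rw [IsRoot, ← coe_aeval_eq_eval, aeval_cubicPoly] at hr
  obtain ⟨n, rfl, hn⟩ := exists_integer_of_is_root_of_monic (cubicPoly_monic ℤ)
    (r := r) (by rwa [aeval_cubicPoly])
  have hcoeff : (cubicPoly ℤ).coeff 0 = -1 := by simp [cubicPoly]
  rw [hcoeff, dvd_neg, ← isUnit_iff_dvd_one, Int.isUnit_iff] at hn
  rcases hn with rfl | rfl <;> norm_num at hr

theorem minpoly_eq_cubicPoly {K : Type*} [Field K] [Algebra ℚ K] {α : K}
    (hf : α ^ 3 + α ^ 2 - 6 * α - 1 = 0) : minpoly ℚ α = cubicPoly ℚ :=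
  (minpoly.eq_of_irreducible_of_monic irreducible_cubicPoly (by simpa using hf)
    (cubicPoly_monic ℚ)).symm

theorem exists_eq_of_mem_adjoin {R A : Type*} [CommRing R] [CommRing A] [Algebra R A] {α : A}
    (hf : α ^ 3 + α ^ 2 - 6 * α - 1 = 0) {η : A} (hη : η ∈ Algebra.adjoin R {α}) :
    ∃ u v w : R, η = algebraMap R A u + algebraMap R A v * α + algebraMap R A w * α ^ 2 := by
  nontriviality A
  have := (algebraMap R A).domain_nontrivial
  rw [Algebra.adjoin_singleton_eq_range_aeval, AlgHom.mem_range] at hη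
  obtain ⟨p, rfl⟩ := hη
  have hdeg : (p %ₘ cubicPoly R).natDegree < 3 :=
    natDegree_cubicPoly R ▸ natDegree_modByMonic_lt p (cubicPoly_monic R)
      (ne_of_apply_ne natDegree (by simp [natDegree_cubicPoly]))
  rw [← aeval_modByMonic_eq_self_of_root (q := cubicPoly R) (by simpa using hf),
    aeval_eq_sum_range' hdeg]
  simp only [Algebra.smul_def, Finset.sum_range_succ, Finset.range_one, Finset.sum_singleton,
    pow_zero, mul_one, pow_one]
  exact ⟨_, _, _, rfl⟩

theorem Algebra.leftMulMatrix_eq_of_mul_eq_sum {R S ι : Type*} [CommRing R] [Ring S]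
    [Algebra R S] [Fintype ι] [DecidableEq ι] (b : Module.Basis ι R S) {x : S}
    {M : Matrix ι ι R} (h : ∀ j, x * b j = ∑ i, M i j • b i) : leftMulMatrix b x = M := by
  ext i j
  rw [leftMulMatrix_eq_repr_mul, h, b.repr_sum_self]

theorem PowerBasis.norm_eq_normForm {F L : Type*} [CommRing F] [CommRing L] [Algebra F L]
    (pb : PowerBasis F L) (hdim : pb.dim = 3)
    (hf : pb.gen ^ 3 + pb.gen ^ 2 - 6 * pb.gen - 1 = 0) (a b c : F) :
    Algebra.norm F (algebraMap F L a + algebraMap F L b * pb.gen + algebraMap F L c * pb.gen ^ 2)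
      = normForm a b c := by
  let β := pb.basis.reindex (finCongr hdim)
  have hβ (i : Fin 3) : β i = pb.gen ^ (i : ℕ) := by simp [β]
  -- column `j` holds the coordinates of `x * α ^ j`, reduced by `α³ = 1 + 6α - α²`
  rw [Algebra.norm_eq_matrix_det β, Algebra.leftMulMatrix_eq_of_mul_eq_sum β
    (M := !![a, c, b - c; b, a + 6 * c, 6 * b - 5 * c; c, b - c, a - b + 7 * c]),
    Matrix.det_fin_three]
  · simp only [Matrix.of_apply, Matrix.cons_val', Matrix.cons_val_zero, Matrix.cons_val_one,
      Matrix.cons_val, Matrix.cons_val_fin_one, normForm]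
    ring
  · intro j
    fin_cases j <;>
      simp only [Fin.sum_univ_three, hβ, Algebra.smul_def, map_add, map_sub, map_mul, map_ofNat,
        Matrix.of_apply, Matrix.cons_val', Matrix.cons_val_zero, Matrix.cons_val_one,
        Matrix.cons_val, Fin.reduceFinMk, Fin.val_zero, Fin.val_one, Fin.val_two]
    · ring
    · linear_combination algebraMap F L c * hf
    · linear_combination (algebraMap F L b + algebraMap F L c * (pb.gen - 1)) * hf

theorem norm_eq_normForm_of_adjoin_eq_top {K : Type*} [Field K] [Algebra ℚ K] {α : K}
    (hf : α ^ 3 + α ^ 2 - 6 * α - 1 = 0) (hgen : Algebra.adjoin ℚ {α} = ⊤) (a b c : ℚ) :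
    Algebra.norm ℚ (algebraMap ℚ K a + algebraMap ℚ K b * α + algebraMap ℚ K c * α ^ 2)
      = normForm a b c := by
  have hint : IsIntegral ℚ α :=
    ⟨cubicPoly ℚ, cubicPoly_monic ℚ, by rwa [← aeval_def, aeval_cubicPoly]⟩
  have hdim : (PowerBasis.ofAdjoinEqTop hint hgen).dim = 3 := by
    rw [PowerBasis.ofAdjoinEqTop_dim, minpoly_eq_cubicPoly hf, natDegree_cubicPoly]
  simpa using (PowerBasis.ofAdjoinEqTop hint hgen).norm_eq_normForm hdim hf a b c

theorem norm_sub_eq_normForm_div {K : Type*} [Field K] [Algebra ℚ K] {α : K}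
    (hf : α ^ 3 + α ^ 2 - 6 * α - 1 = 0) (hgen : Algebra.adjoin ℚ {α} = ⊤) (u v w : ℤ) :
    Algebra.norm ℚ ((2 - α + 2 * α ^ 2) / 5 - (u + v * α + w * α ^ 2))
      = normForm (2 - 5 * u) (-1 - 5 * v) (2 - 5 * w) / 125 := by
  have hξ : (2 - α + 2 * α ^ 2) / 5 - (u + v * α + w * α ^ 2) = algebraMap ℚ K ((2 - 5 * u) / 5)
      + algebraMap ℚ K ((-1 - 5 * v) / 5) * α + algebraMap ℚ K ((2 - 5 * w) / 5) * α ^ 2 := by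
    have h5 : (5 : K) ≠ 0 := by
      simpa using (algebraMap ℚ K).injective.ne (by norm_num : (5 : ℚ) ≠ 0)
    simp only [map_div₀, map_sub, map_neg, map_mul, map_ofNat, map_one, map_intCast]
    field_simp
    ring
  rw [hξ, norm_eq_normForm_of_adjoin_eq_top hf hgen]
  push_cast [normForm]
  ring

theorem stmt_17_general (K : Type*) [Field K] [NumberField K]
    (α : K) (hf : α ^ 3 + α ^ 2 - 6 * α - 1 = 0)
    (hgen : Algebra.adjoin ℚ {α} = ⊤) :
    (∀ η ∈ Algebra.adjoin ℤ {α},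
      1 ≤ |Algebra.norm ℚ ((2 - α + 2 * α ^ 2) / 5 - η)|) ∧
    Algebra.norm ℚ ((2 - α + 2 * α ^ 2) / 5 - 2) = 1 := by
  refine ⟨fun η hη => ?_, ?_⟩
  · obtain ⟨u, v, w, rfl⟩ := exists_eq_of_mem_adjoin hf hη
    simp only [eq_intCast]
    rw [norm_sub_eq_normForm_div hf hgen, abs_div, le_div_iff₀ (by norm_num)]
    exact_mod_cast le_abs_normForm_coset u v w
  · simpa [normForm] using norm_sub_eq_normForm_div hf hgen 2 0 0

/-- For the totally real cubic field `K = ℚ(α)` of discriminant `985`, where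
`α³ + α² - 6α - 1 = 0` and `O_K = ℤ[α]`, the point `ξ₀ = (2 - α + 2α²)/5` has
Euclidean minimum `M(K, ξ₀) = 1`: every `η ∈ O_K` satisfies
`|N(ξ₀ - η)| ≥ 1`, with equality for `η = 2`. -/
theorem stmt_17 (K : Type*) [Field K] [NumberField K]
    (α : K) (hf : α ^ 3 + α ^ 2 - 6 * α - 1 = 0)
    (hgen : Algebra.adjoin ℚ {α} = ⊤)
    (hO : ∀ x : K, IsIntegral ℤ x ↔ x ∈ Algebra.adjoin ℤ {α}) :
    (∀ η ∈ Algebra.adjoin ℤ {α},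
      1 ≤ |Algebra.norm ℚ ((2 - α + 2 * α ^ 2) / 5 - η)|) ∧
    Algebra.norm ℚ ((2 - α + 2 * α ^ 2) / 5 - 2) = 1 :=
  stmt_17_general K α hf hgen
end

section
/- Let ℓ ≥ 2 be an even integer such that m = ℓ³ + 1 is squarefree, let α be the real cube root of m (so α³ = ℓ³ + 1), and let K = ℚ(α), a pure cubic field; put ξ = (1 + α + α²)/2. If ℓ ≡ 2 (mod 4), then θ = ℓ²/4 + 1/2 + (ℓ/4)α − (1/2)α² satisfies ξ − θ ∈ ℤ[α] and |N_{K/ℚ}(θ)| = (18ℓ⁴ − 9ℓ³ + 12ℓ² + 12ℓ)/64; if ℓ ≡ 0 (mod 4), then θ = ℓ²/4 + ℓ/2 + 1/2 + (ℓ/4 − 1/2)α − (1/2)α² satisfies ξ − θ ∈ ℤ[α] and |N_{K/ℚ}(θ)| = (18ℓ⁴ − 9ℓ³ + 30ℓ² + 24ℓ − 32)/64. Consequently inf{ |N_{K/ℚ}(ξ − η)| : η ∈ ℤ[α] } is at most the corresponding value. -/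
/-!
For `ℓ = 4k + 2` one has `ξ - θ = -(2k + 1)² - kα + α²`, and for `ℓ = 4k` one has
`ξ - θ = -(4k² + 2k) + (1 - k)α + α²`; both lie in `ℤ[α]`, so `η = ξ - θ` is admissible in the
infimum. Since `X³ - m` is irreducible over `ℚ` for squarefree `m ≠ ±1`, `1, α, α²` is a
`ℚ`-basis of `K`, and the norm of `a + bα + cα²` is the determinant `a³ + b³m + c³m² - 3abcm`
of its multiplication matrix; substituting `m = ℓ³ + 1` gives the two values.
-/

open Polynomial

theorem Rat.pow_ne_intCast_of_squarefree {m : ℤ} (hm : Squarefree m) (hunit : ¬IsUnit m)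
    {n : ℕ} (hn : 2 ≤ n) (q : ℚ) : q ^ n ≠ m := by
  intro hq
  have hint : IsIntegral ℤ q := ⟨X ^ n - C m, monic_X_pow_sub_C _ (by omega), by
    rw [eval₂_sub, eval₂_X_pow, eval₂_C, hq]; simp⟩
  obtain ⟨k, rfl⟩ := IsIntegrallyClosed.isIntegral_iff.mp hint
  have hk : k ^ n = m := by
    simp only [algebraMap_int_eq, eq_intCast] at hq
    exact_mod_cast hq
  subst hk
  have hk_unit : ¬IsUnit k := fun h => hunit (h.pow n)
  rcases hm.eq_zero_or_one_of_pow_of_not_isUnit hk_unit with h | h <;> omega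

theorem minpoly_eq_X_pow_three_sub_C {K : Type*} [Field K] [CharZero K] {m : ℤ}
    (hm : Squarefree m) (hunit : ¬IsUnit m) {α : K} (hα : α ^ 3 = m) :
    minpoly ℚ α = X ^ 3 - C (m : ℚ) := by
  have hirr : Irreducible (X ^ 3 - C (m : ℚ)) :=
    X_pow_sub_C_irreducible_of_prime Nat.prime_three
      (Rat.pow_ne_intCast_of_squarefree hm hunit (by norm_num))
  refine (minpoly.eq_of_irreducible_of_monic hirr ?_ (monic_X_pow_sub_C _ (by norm_num))).symm
  simp [hα]

section PureCubic
variable {F K : Type*} [Field F] [Field K] [Algebra F K] {m : F} {α : K}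

noncomputable def pureCubicBasis (hmin : minpoly F α = X ^ 3 - C m)
    (hgen : Algebra.adjoin F {α} = ⊤) : Module.Basis (Fin 3) F K :=
  have hint : IsIntegral F α :=
    minpoly.ne_zero_iff.mp (hmin ▸ X_pow_sub_C_ne_zero (by norm_num) m)
  (PowerBasis.ofAdjoinEqTop hint hgen).basis.reindex
    (finCongr (by rw [PowerBasis.ofAdjoinEqTop_dim, hmin, natDegree_X_pow_sub_C]))

theorem pureCubicBasis_apply (hmin : minpoly F α = X ^ 3 - C m)
    (hgen : Algebra.adjoin F {α} = ⊤) (i : Fin 3) :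
    pureCubicBasis hmin hgen i = α ^ (i : ℕ) := by
  rw [pureCubicBasis, Module.Basis.reindex_apply, PowerBasis.basis_eq_pow]
  rfl

theorem leftMulMatrix_pureCubicBasis (hmin : minpoly F α = X ^ 3 - C m)
    (hgen : Algebra.adjoin F {α} = ⊤) (a b c : F) :
    Algebra.leftMulMatrix (pureCubicBasis hmin hgen)
        (algebraMap F K a + algebraMap F K b * α + algebraMap F K c * α ^ 2) =
      !![a, c * m, b * m; b, a, c * m; c, b, a] := by
  have hα : α ^ 3 = algebraMap F K m := by
    simpa [hmin, sub_eq_zero] using minpoly.aeval F α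
  ext i j
  rw [Algebra.leftMulMatrix_eq_repr_mul]
  suffices h : _ * pureCubicBasis hmin hgen j =
      ∑ k, !![a, c * m, b * m; b, a, c * m; c, b, a] k j • pureCubicBasis hmin hgen k by
    rw [h, Module.Basis.repr_sum_self]
  simp only [Fin.sum_univ_three, pureCubicBasis_apply, Algebra.smul_def]
  fin_cases j <;>
    simp only [Fin.isValue, Fin.zero_eta, Fin.mk_one, Fin.reduceFinMk, Fin.coe_ofNat_eq_mod,
      Nat.zero_mod, Nat.one_mod, Nat.mod_succ, pow_zero, pow_one, mul_one, map_mul,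
      Matrix.of_apply, Matrix.cons_val', Matrix.cons_val, Matrix.cons_val_zero,
      Matrix.cons_val_one, Matrix.cons_val_fin_one]
  · linear_combination algebraMap F K c * hα
  · linear_combination (algebraMap F K b + algebraMap F K c * α) * hα

theorem Algebra.norm_pureCubic (hmin : minpoly F α = X ^ 3 - C m)
    (hgen : Algebra.adjoin F {α} = ⊤) (a b c : F) :
    Algebra.norm F (algebraMap F K a + algebraMap F K b * α + algebraMap F K c * α ^ 2) =
      a ^ 3 + b ^ 3 * m + c ^ 3 * m ^ 2 - 3 * a * b * c * m := by
  rw [Algebra.norm_eq_matrix_det (pureCubicBasis hmin hgen), leftMulMatrix_pureCubicBasis,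
    Matrix.det_fin_three]
  simp only [Fin.isValue, Matrix.of_apply, Matrix.cons_val', Matrix.cons_val, Matrix.cons_val_zero,
    Matrix.cons_val_one, Matrix.cons_val_fin_one]
  ring

end PureCubic

theorem norm_theta₂ {K : Type*} [Field K] [CharZero K] {α : K} {ℓ : ℤ}
    (hmin : minpoly ℚ α = X ^ 3 - C ((ℓ ^ 3 + 1 : ℤ) : ℚ))
    (hgen : Algebra.adjoin ℚ {α} = ⊤) :
    Algebra.norm ℚ ((ℓ : K) ^ 2 / 4 + 1 / 2 + ((ℓ : K) / 4) * α - α ^ 2 / 2) =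
      ((18 * ℓ ^ 4 - 9 * ℓ ^ 3 + 12 * ℓ ^ 2 + 12 * ℓ : ℤ) : ℚ) / 64 := by
  have hθ : (ℓ : K) ^ 2 / 4 + 1 / 2 + ((ℓ : K) / 4) * α - α ^ 2 / 2 =
      algebraMap ℚ K ((ℓ : ℚ) ^ 2 / 4 + 1 / 2) + algebraMap ℚ K ((ℓ : ℚ) / 4) * α +
        algebraMap ℚ K (-1 / 2) * α ^ 2 := by
    simp only [map_add, map_div₀, map_pow, map_intCast, map_one, map_ofNat, map_neg]
    ring
  rw [hθ, Algebra.norm_pureCubic hmin hgen]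
  push_cast
  ring

theorem norm_theta₀ {K : Type*} [Field K] [CharZero K] {α : K} {ℓ : ℤ}
    (hmin : minpoly ℚ α = X ^ 3 - C ((ℓ ^ 3 + 1 : ℤ) : ℚ))
    (hgen : Algebra.adjoin ℚ {α} = ⊤) :
    Algebra.norm ℚ
        ((ℓ : K) ^ 2 / 4 + (ℓ : K) / 2 + 1 / 2 + ((ℓ : K) / 4 - 1 / 2) * α - α ^ 2 / 2) =
      ((18 * ℓ ^ 4 - 9 * ℓ ^ 3 + 30 * ℓ ^ 2 + 24 * ℓ - 32 : ℤ) : ℚ) / 64 := by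
  have hθ : (ℓ : K) ^ 2 / 4 + (ℓ : K) / 2 + 1 / 2 + ((ℓ : K) / 4 - 1 / 2) * α - α ^ 2 / 2 =
      algebraMap ℚ K ((ℓ : ℚ) ^ 2 / 4 + ℓ / 2 + 1 / 2) +
        algebraMap ℚ K ((ℓ : ℚ) / 4 - 1 / 2) * α + algebraMap ℚ K (-1 / 2) * α ^ 2 := by
    simp only [map_add, map_sub, map_div₀, map_pow, map_intCast, map_one, map_ofNat, map_neg]
    ring
  rw [hθ, Algebra.norm_pureCubic hmin hgen]
  push_cast
  ring

theorem intCast_add_mul_add_mul_sq_mem_adjoin {R : Type*} [CommRing R] (α : R) (p q r : ℤ) :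
    (p : R) + q * α + r * α ^ 2 ∈ Algebra.adjoin ℤ {α} := by
  have hα : α ∈ Algebra.adjoin ℤ {α} := Algebra.subset_adjoin rfl
  exact add_mem (add_mem (intCast_mem _ p) (mul_mem (intCast_mem _ q) hα))
    (mul_mem (intCast_mem _ r) (pow_mem hα 2))

theorem xi_sub_theta₂_mem_adjoin {K : Type*} [Field K] [CharZero K] (α : K) {ℓ : ℤ}
    (hℓ : ℓ % 4 = 2) :
    (1 + α + α ^ 2) / 2 - ((ℓ : K) ^ 2 / 4 + 1 / 2 + ((ℓ : K) / 4) * α - α ^ 2 / 2) ∈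
      Algebra.adjoin ℤ {α} := by
  obtain ⟨k, rfl⟩ : ∃ k, ℓ = 4 * k + 2 := ⟨ℓ / 4, by omega⟩
  convert intCast_add_mul_add_mul_sq_mem_adjoin α (-(4 * k ^ 2 + 4 * k + 1)) (-k) 1 using 1
  push_cast
  ring

theorem xi_sub_theta₀_mem_adjoin {K : Type*} [Field K] [CharZero K] (α : K) {ℓ : ℤ}
    (hℓ : ℓ % 4 = 0) :
    (1 + α + α ^ 2) / 2 -
        ((ℓ : K) ^ 2 / 4 + (ℓ : K) / 2 + 1 / 2 + ((ℓ : K) / 4 - 1 / 2) * α - α ^ 2 / 2) ∈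
      Algebra.adjoin ℤ {α} := by
  obtain ⟨k, rfl⟩ : ∃ k, ℓ = 4 * k := ⟨ℓ / 4, by omega⟩
  convert intCast_add_mul_add_mul_sq_mem_adjoin α (-(4 * k ^ 2 + 2 * k)) (1 - k) 1 using 1
  push_cast
  ring

theorem abs_norm_eq_and_sInf_le {K : Type*} [Field K] [Algebra ℚ K] {S : Set K} {ξ θ : K}
    {q : ℚ} (h : ξ - θ ∈ S) (hθ : Algebra.norm ℚ θ = q) (hq : 0 ≤ q) :
    |Algebra.norm ℚ θ| = q ∧
      sInf {x : ℝ | ∃ η ∈ S, x = |((Algebra.norm ℚ (ξ - η) : ℚ) : ℝ)|} ≤ q := by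
  have habs : |Algebra.norm ℚ θ| = q := by rw [hθ, abs_of_nonneg hq]
  refine ⟨habs, csInf_le ⟨0, by rintro x ⟨η, -, rfl⟩; positivity⟩ ⟨ξ - θ, h, ?_⟩⟩
  rw [sub_sub_cancel, ← Rat.cast_abs, habs]

theorem stmt_19_general (K : Type*) [Field K] [NumberField K]
    (ℓ : ℤ) (hℓ2 : 2 ≤ ℓ)
    (hm : Squarefree (ℓ ^ 3 + 1))
    (α : K) (hα : α ^ 3 = ((ℓ ^ 3 + 1 : ℤ) : K))
    (hgen : Algebra.adjoin ℚ {α} = ⊤) :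
    (ℓ % 4 = 2 →
      ((1 + α + α ^ 2) / 2 -
          ((ℓ : K) ^ 2 / 4 + 1 / 2 + ((ℓ : K) / 4) * α - α ^ 2 / 2)
            ∈ Algebra.adjoin ℤ {α}) ∧
      |Algebra.norm ℚ ((ℓ : K) ^ 2 / 4 + 1 / 2 + ((ℓ : K) / 4) * α - α ^ 2 / 2)| =
        ((18 * ℓ ^ 4 - 9 * ℓ ^ 3 + 12 * ℓ ^ 2 + 12 * ℓ : ℤ) : ℚ) / 64 ∧
      sInf {x : ℝ | ∃ η ∈ Algebra.adjoin ℤ {α},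
          x = |((Algebra.norm ℚ ((1 + α + α ^ 2) / 2 - η) : ℚ) : ℝ)|} ≤
        (((18 * ℓ ^ 4 - 9 * ℓ ^ 3 + 12 * ℓ ^ 2 + 12 * ℓ : ℤ) : ℝ)) / 64) ∧
    (ℓ % 4 = 0 →
      ((1 + α + α ^ 2) / 2 -
          ((ℓ : K) ^ 2 / 4 + (ℓ : K) / 2 + 1 / 2 + ((ℓ : K) / 4 - 1 / 2) * α - α ^ 2 / 2)
            ∈ Algebra.adjoin ℤ {α}) ∧
      |Algebra.norm ℚ
          ((ℓ : K) ^ 2 / 4 + (ℓ : K) / 2 + 1 / 2 + ((ℓ : K) / 4 - 1 / 2) * α - α ^ 2 / 2)| =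
        ((18 * ℓ ^ 4 - 9 * ℓ ^ 3 + 30 * ℓ ^ 2 + 24 * ℓ - 32 : ℤ) : ℚ) / 64 ∧
      sInf {x : ℝ | ∃ η ∈ Algebra.adjoin ℤ {α},
          x = |((Algebra.norm ℚ ((1 + α + α ^ 2) / 2 - η) : ℚ) : ℝ)|} ≤
        (((18 * ℓ ^ 4 - 9 * ℓ ^ 3 + 30 * ℓ ^ 2 + 24 * ℓ - 32 : ℤ) : ℝ)) / 64) := by
  have hunit : ¬IsUnit (ℓ ^ 3 + 1) := by
    have : 2 ^ 3 ≤ ℓ ^ 3 := pow_le_pow_left₀ (by norm_num) hℓ2 3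
    rw [Int.isUnit_iff]
    omega
  have hmin := minpoly_eq_X_pow_three_sub_C hm hunit hα
  have hlead : 0 ≤ ℓ ^ 3 * (2 * ℓ - 1) := mul_nonneg (by positivity) (by omega)
  refine ⟨fun h => ?_, fun h => ?_⟩
  · obtain ⟨habs, hinf⟩ := abs_norm_eq_and_sInf_le (xi_sub_theta₂_mem_adjoin α h)
      (norm_theta₂ hmin hgen) (div_nonneg (Int.cast_nonneg (by nlinarith)) (by norm_num))
    exact ⟨xi_sub_theta₂_mem_adjoin α h, habs, hinf.trans_eq (by push_cast; ring)⟩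
  · obtain ⟨habs, hinf⟩ := abs_norm_eq_and_sInf_le (xi_sub_theta₀_mem_adjoin α h)
      (norm_theta₀ hmin hgen) (div_nonneg (Int.cast_nonneg (by nlinarith)) (by norm_num))
    exact ⟨xi_sub_theta₀_mem_adjoin α h, habs, hinf.trans_eq (by push_cast; ring)⟩

/-- Upper bounds for the Euclidean minimum of `ξ = (1 + α + α²)/2` in the pure
cubic field `K = ℚ(α)`, `α³ = m = ℓ³ + 1` with `ℓ ≥ 2` even and `m` squarefree:
for `ℓ ≡ 2 (mod 4)` the element `θ = ℓ²/4 + 1/2 + (ℓ/4)α - (1/2)α²` is congruent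
to `ξ` modulo `ℤ[α]` and has `|N(θ)| = (18ℓ⁴ - 9ℓ³ + 12ℓ² + 12ℓ)/64`; for
`ℓ ≡ 0 (mod 4)` the element `θ = ℓ²/4 + ℓ/2 + 1/2 + (ℓ/4 - 1/2)α - (1/2)α²` is
congruent to `ξ` modulo `ℤ[α]` and has
`|N(θ)| = (18ℓ⁴ - 9ℓ³ + 30ℓ² + 24ℓ - 32)/64`; hence in each case
`inf { |N(ξ - η)| : η ∈ ℤ[α] }` is at most the corresponding value. -/
theorem stmt_19 (K : Type*) [Field K] [NumberField K]
    (ℓ : ℤ) (hℓ2 : 2 ≤ ℓ) (hℓeven : Even ℓ)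
    (hm : Squarefree (ℓ ^ 3 + 1))
    (α : K) (hα : α ^ 3 = ((ℓ ^ 3 + 1 : ℤ) : K))
    (hgen : Algebra.adjoin ℚ {α} = ⊤) :
    (ℓ % 4 = 2 →
      ((1 + α + α ^ 2) / 2 -
          ((ℓ : K) ^ 2 / 4 + 1 / 2 + ((ℓ : K) / 4) * α - α ^ 2 / 2)
            ∈ Algebra.adjoin ℤ {α}) ∧
      |Algebra.norm ℚ ((ℓ : K) ^ 2 / 4 + 1 / 2 + ((ℓ : K) / 4) * α - α ^ 2 / 2)| =
        ((18 * ℓ ^ 4 - 9 * ℓ ^ 3 + 12 * ℓ ^ 2 + 12 * ℓ : ℤ) : ℚ) / 64 ∧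
      sInf {x : ℝ | ∃ η ∈ Algebra.adjoin ℤ {α},
          x = |((Algebra.norm ℚ ((1 + α + α ^ 2) / 2 - η) : ℚ) : ℝ)|} ≤
        (((18 * ℓ ^ 4 - 9 * ℓ ^ 3 + 12 * ℓ ^ 2 + 12 * ℓ : ℤ) : ℝ)) / 64) ∧
    (ℓ % 4 = 0 →
      ((1 + α + α ^ 2) / 2 -
          ((ℓ : K) ^ 2 / 4 + (ℓ : K) / 2 + 1 / 2 + ((ℓ : K) / 4 - 1 / 2) * α - α ^ 2 / 2)
            ∈ Algebra.adjoin ℤ {α}) ∧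
      |Algebra.norm ℚ
          ((ℓ : K) ^ 2 / 4 + (ℓ : K) / 2 + 1 / 2 + ((ℓ : K) / 4 - 1 / 2) * α - α ^ 2 / 2)| =
        ((18 * ℓ ^ 4 - 9 * ℓ ^ 3 + 30 * ℓ ^ 2 + 24 * ℓ - 32 : ℤ) : ℚ) / 64 ∧
      sInf {x : ℝ | ∃ η ∈ Algebra.adjoin ℤ {α},
          x = |((Algebra.norm ℚ ((1 + α + α ^ 2) / 2 - η) : ℚ) : ℝ)|} ≤
        (((18 * ℓ ^ 4 - 9 * ℓ ^ 3 + 30 * ℓ ^ 2 + 24 * ℓ - 32 : ℤ) : ℝ)) / 64) :=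
  stmt_19_general K ℓ hℓ2 hm α hα hgen
end
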